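/- arXiv:2009.12733 — 8 statements merged into one kernel-verified Lean document; each statement's English description precedes it below -/
import Mathlib

section
/- Let n, m ≥ 1, let f : ℝⁿ → ℝⁿ, G : ℝⁿ → ℝ^{n×m}, and let (x₀, ẋ₀, u₀) ∈ ℝⁿ × ℝⁿ × ℝᵐ satisfy ẋ₀ = f(x₀) + G(x₀)u₀ (i.e., (ẋ₀)_k = f(x₀)_k + Σ_{l=1}^{m} G(x₀)_{k,l}(u₀)_l for each k). Suppose f(x₀)_k ∈ [F̲_k, F̄_k] and G(x₀)_{k,l} ∈ [G̲_{k,l}, Ḡ_{k,l}] for all k, l. Then for every k ∈ {1,…,n}: f(x₀)_k ∈ [F̲_k, F̄_k] ∩ [(ẋ₀)_k − Σ_{l=1}^{m} max(G̲_{k,l}(u₀)_l, Ḡ_{k,l}(u₀)_l), (ẋ₀)_k − Σ_{l=1}^{m} min(G̲_{k,l}(u₀)_l, Ḡ_{k,l}(u₀)_l)]. -/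
open scoped BigOperators

theorem stmt1 (n m : ℕ) (hn : 1 ≤ n) (hm : 1 ≤ m)
    (f : (Fin n → ℝ) → Fin n → ℝ)
    (G : (Fin n → ℝ) → Fin n → Fin m → ℝ)
    (x0 dx0 : Fin n → ℝ) (u0 : Fin m → ℝ)
    (hdyn : ∀ k, dx0 k = f x0 k + ∑ l, G x0 k l * u0 l)
    (Flo Fhi : Fin n → ℝ) (Glo Ghi : Fin n → Fin m → ℝ)
    (hFle : ∀ k, Flo k ≤ Fhi k)
    (hGle : ∀ k l, Glo k l ≤ Ghi k l)
    (hF : ∀ k, f x0 k ∈ Set.Icc (Flo k) (Fhi k))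
    (hG : ∀ k l, G x0 k l ∈ Set.Icc (Glo k l) (Ghi k l)) :
    ∀ k, f x0 k ∈
      Set.Icc (Flo k) (Fhi k) ∩
        Set.Icc (dx0 k - ∑ l, max (Glo k l * u0 l) (Ghi k l * u0 l))
                (dx0 k - ∑ l, min (Glo k l * u0 l) (Ghi k l * u0 l)) := by
  intro k
  refine ⟨hF k, ?_, ?_⟩
  · have : (∑ l, G x0 k l * u0 l) ≤ ∑ l, max (Glo k l * u0 l) (Ghi k l * u0 l) := by
      apply Finset.sum_le_sum
      intro l _
      rcases le_or_gt 0 (u0 l) with h | h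
      · exact le_max_of_le_right (mul_le_mul_of_nonneg_right (hG k l).2 h)
      · exact le_max_of_le_left (mul_le_mul_of_nonpos_right (hG k l).1 h.le)
    have := hdyn k; linarith
  · have : (∑ l, min (Glo k l * u0 l) (Ghi k l * u0 l)) ≤ ∑ l, G x0 k l * u0 l := by
      apply Finset.sum_le_sum
      intro l _
      rcases le_or_gt 0 (u0 l) with h | h
      · exact min_le_of_left_le (mul_le_mul_of_nonneg_right (hG k l).1 h)
      · exact min_le_of_right_le (mul_le_mul_of_nonpos_right (hG k l).2 h.le)
    have := hdyn k; linarith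
end

section
/- Let n, m ≥ 1 and fix k ∈ {1,…,n}. Let ẋ_k ∈ ℝ, u ∈ ℝᵐ, and real bounds F̲ ≤ F̄ and G̲_l ≤ Ḡ_l for l ∈ {1,…,m}. Then the intersection [F̲, F̄] ∩ [ẋ_k − Σ_{l=1}^{m} max(G̲_l u_l, Ḡ_l u_l), ẋ_k − Σ_{l=1}^{m} min(G̲_l u_l, Ḡ_l u_l)] is exactly the set of values v ∈ [F̲, F̄] for which there exist g_1,…,g_m with g_l ∈ [G̲_l, Ḡ_l] for every l and v + Σ_{l=1}^{m} g_l u_l = ẋ_k. In particular, this intersection is the smallest interval containing every value of f(x₀)_k consistent with the single data constraint ẋ_k = f(x₀)_k + Σ_l G(x₀)_{k,l} u_l and the given interval bounds. -/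
open scoped BigOperators

theorem stmt3 (n m : ℕ) (hn : 1 ≤ n) (hm : 1 ≤ m) (k : Fin n)
    (dxk : ℝ) (u : Fin m → ℝ)
    (Flo Fhi : ℝ) (hF : Flo ≤ Fhi)
    (Glo Ghi : Fin m → ℝ) (hG : ∀ l, Glo l ≤ Ghi l) :
    Set.Icc Flo Fhi ∩
        Set.Icc (dxk - ∑ l, max (Glo l * u l) (Ghi l * u l))
                (dxk - ∑ l, min (Glo l * u l) (Ghi l * u l)) =
      {v : ℝ | v ∈ Set.Icc Flo Fhi ∧
        ∃ g : Fin m → ℝ, (∀ l, g l ∈ Set.Icc (Glo l) (Ghi l)) ∧ v + ∑ l, g l * u l = dxk} := by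
  set Smin := ∑ l, min (Glo l * u l) (Ghi l * u l) with hSmin
  set Smax := ∑ l, max (Glo l * u l) (Ghi l * u l) with hSmax
  ext v
  simp only [Set.mem_inter_iff, Set.mem_Icc, Set.mem_setOf_eq]
  constructor
  · rintro ⟨hv1, hv2, hv3⟩
    refine ⟨hv1, ?_⟩
    set s := dxk - v with hs
    have hs1 : Smin ≤ s := by simp [hs]; linarith
    have hs2 : s ≤ Smax := by simp [hs]; linarith
    set A : Fin m → ℝ := fun l => if Glo l * u l ≤ Ghi l * u l then Glo l else Ghi l with hA
    set B : Fin m → ℝ := fun l => if Glo l * u l ≤ Ghi l * u l then Ghi l else Glo l with hB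
    have hAu : ∀ l, A l * u l = min (Glo l * u l) (Ghi l * u l) := by
      intro l; simp only [hA]; split <;> simp [min_def, *] <;> omega
    have hBu : ∀ l, B l * u l = max (Glo l * u l) (Ghi l * u l) := by
      intro l; simp only [hB]; split <;> simp [max_def, *]
    have hAu' : ∀ l, A l * u l = min (Glo l * u l) (Ghi l * u l) := hAu
    have hABlo : ∀ l, Glo l ≤ A l ∧ A l ≤ Ghi l := by
      intro l; simp only [hA]; split <;> exact ⟨by simp [hG l], by simp [hG l]⟩
    have hABhi : ∀ l, Glo l ≤ B l ∧ B l ≤ Ghi l := by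
      intro l; simp only [hB]; split <;> exact ⟨by simp [hG l], by simp [hG l]⟩
    set t : ℝ := if h : Smax - Smin = 0 then 0 else (s - Smin) / (Smax - Smin) with ht
    have htmem : 0 ≤ t ∧ t ≤ 1 := by
      constructor
      · simp only [ht]; split
        · exact le_rfl
        · exact div_nonneg (by linarith) (by rename_i h; rcases lt_or_gt_of_ne h with h'|h' <;> linarith)
      · simp only [ht]; split
        · norm_num
        · rename_i h
          have hpos : 0 < Smax - Smin := by rcases lt_or_gt_of_ne h with h'|h' <;> linarith
          rw [div_le_one hpos]; linarith
    have hteq : Smin + t * (Smax - Smin) = s := by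
      simp only [ht]; split
      · rename_i h; linarith
      · rename_i h; field_simp; ring
    refine ⟨fun l => A l + t * (B l - A l), fun l => ⟨?_, ?_⟩, ?_⟩
    · show Glo l ≤ A l + t * (B l - A l)
      nlinarith [(hABlo l).1, (hABhi l).1, htmem.1, htmem.2]
    · show A l + t * (B l - A l) ≤ Ghi l
      nlinarith [(hABlo l).2, (hABhi l).2, htmem.1, htmem.2]
    · have e1 : ∑ l, (A l + t * (B l - A l)) * u l
          = ∑ l, A l * u l + (t * ∑ l, B l * u l - t * ∑ l, A l * u l) := by
        rw [Finset.mul_sum, Finset.mul_sum, ← Finset.sum_sub_distrib, ← Finset.sum_add_distrib]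
        exact Finset.sum_congr rfl fun l _ => by ring
      have e2 : ∑ l, A l * u l = Smin := Finset.sum_congr rfl fun l _ => hAu l
      have e3 : ∑ l, B l * u l = Smax := Finset.sum_congr rfl fun l _ => hBu l
      show v + ∑ l, (A l + t * (B l - A l)) * u l = dxk
      rw [e1, e2, e3]
      have : Smin + t * (Smax - Smin) = dxk - v := hteq
      linarith
  · rintro ⟨⟨hv1, hv2⟩, g, hg, hsum⟩
    refine ⟨⟨hv1, hv2⟩, ?_, ?_⟩
    · have : ∑ l, g l * u l ≤ Smax := by
        apply Finset.sum_le_sum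
        intro l _
        rcases le_or_gt 0 (u l) with h | h
        · exact le_max_of_le_right (by nlinarith [(hg l).2])
        · exact le_max_of_le_left (by nlinarith [(hg l).1])
      linarith
    · have : Smin ≤ ∑ l, g l * u l := by
        apply Finset.sum_le_sum
        intro l _
        rcases le_or_gt 0 (u l) with h | h
        · exact min_le_of_left_le (by nlinarith [(hg l).1])
        · exact min_le_of_right_le (by nlinarith [(hg l).2])
      linarith
end

section
/- Let n, m ≥ 1 and fix k ∈ {1,…,n} and l ∈ {1,…,m}. Let f : ℝⁿ → ℝⁿ, G : ℝⁿ → ℝ^{n×m}, and let (x₀, ẋ₀, u₀) satisfy (ẋ₀)_k = f(x₀)_k + Σ_{p=1}^{m} G(x₀)_{k,p}(u₀)_p. Suppose f(x₀)_k ∈ [F̲, F̄] and G(x₀)_{k,p} ∈ [G̲_p, Ḡ_p] for all p ∈ {1,…,m}, and suppose (u₀)_l ≠ 0. Let I be the intersection of the interval [(ẋ₀)_k − F̄ − Σ_{p≠l} max(G̲_p(u₀)_p, Ḡ_p(u₀)_p), (ẋ₀)_k − F̲ − Σ_{p≠l} min(G̲_p(u₀)_p, Ḡ_p(u₀)_p)]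 with the interval [min(G̲_l(u₀)_l, Ḡ_l(u₀)_l), max(G̲_l(u₀)_l, Ḡ_l(u₀)_l)]. Then G(x₀)_{k,l} ∈ { s/(u₀)_l : s ∈ I }. -/
open scoped BigOperators

lemma mul_mem_minmax {a lo hi u : ℝ} (h1 : lo ≤ a) (h2 : a ≤ hi) :
    min (lo * u) (hi * u) ≤ a * u ∧ a * u ≤ max (lo * u) (hi * u) := by
  rcases le_total 0 u with hu | hu
  · constructor
    · exact le_trans (min_le_left _ _) (mul_le_mul_of_nonneg_right h1 hu)
    · exact le_trans (mul_le_mul_of_nonneg_right h2 hu) (le_max_right _ _)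
  · constructor
    · exact le_trans (min_le_right _ _) (mul_le_mul_of_nonpos_right h2 hu)
    · exact le_trans (mul_le_mul_of_nonpos_right h1 hu) (le_max_left _ _)

theorem stmt4 (n m : ℕ) (hn : 1 ≤ n) (hm : 1 ≤ m) (k : Fin n) (l : Fin m)
    (f : (Fin n → ℝ) → Fin n → ℝ)
    (G : (Fin n → ℝ) → Fin n → Fin m → ℝ)
    (x0 dx0 : Fin n → ℝ) (u0 : Fin m → ℝ)
    (hdyn : dx0 k = f x0 k + ∑ p, G x0 k p * u0 p)
    (Flo Fhi : ℝ) (Glo Ghi : Fin m → ℝ)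
    (hF : f x0 k ∈ Set.Icc Flo Fhi)
    (hG : ∀ p, G x0 k p ∈ Set.Icc (Glo p) (Ghi p))
    (hu : u0 l ≠ 0) :
    G x0 k l ∈ (fun s : ℝ => s / u0 l) ''
      (Set.Icc (dx0 k - Fhi - ∑ p ∈ Finset.univ.erase l, max (Glo p * u0 p) (Ghi p * u0 p))
               (dx0 k - Flo - ∑ p ∈ Finset.univ.erase l, min (Glo p * u0 p) (Ghi p * u0 p)) ∩
       Set.Icc (min (Glo l * u0 l) (Ghi l * u0 l)) (max (Glo l * u0 l) (Ghi l * u0 l))) := by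
  refine ⟨G x0 k l * u0 l, ⟨?_, ?_⟩, by field_simp⟩
  · have hsum : dx0 k = f x0 k + (∑ p ∈ Finset.univ.erase l, G x0 k p * u0 p)
        + G x0 k l * u0 l := by
      rw [hdyn, add_assoc, Finset.sum_erase_add _ _ (Finset.mem_univ l)]
    have hlo : ∑ p ∈ Finset.univ.erase l, G x0 k p * u0 p ≤
        ∑ p ∈ Finset.univ.erase l, max (Glo p * u0 p) (Ghi p * u0 p) :=
      Finset.sum_le_sum fun p _ => (mul_mem_minmax (hG p).1 (hG p).2).2
    have hhi : ∑ p ∈ Finset.univ.erase l, min (Glo p * u0 p) (Ghi p * u0 p) ≤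
        ∑ p ∈ Finset.univ.erase l, G x0 k p * u0 p :=
      Finset.sum_le_sum fun p _ => (mul_mem_minmax (hG p).1 (hG p).2).1
    constructor
    · have := hF.2
      rw [hsum]; linarith
    · have := hF.1
      rw [hsum]; linarith
  · exact Set.mem_Icc.mpr (mul_mem_minmax (hG l).1 (hG l).2)
end

section
/- Let n, m ≥ 1 and let f : ℝⁿ → ℝⁿ and G : ℝⁿ → ℝ^{n×m} be such that each component f(·)_k is Lipschitz with constant L^f_k and each entry G(·)_{k,l} is Lipschitz with constant L^G_{k,l}, with respect to the Euclidean norm on ℝⁿ. Let x_0,…,x_N ∈ ℝⁿ and, for each i, let a^i_k ≤ b^i_k and c^i_{k,l} ≤ d^i_{k,l} be reals with f(x_i)_k ∈ [a^i_k, b^i_k] and G(x_i)_{k,l} ∈ [c^i_{k,l}, d^i_{k,l}]. Define the interval-valued maps 𝐟_k(x) = ⋂_i [a^i_k − L^f_k‖x − x_i‖₂, b^i_k + L^f_k‖x − x_i‖₂] and 𝐆_{k,l}(x) = ⋂_i [c^i_{k,l} − L^G_{k,l}‖x − x_i‖₂, d^i_{k,l} + L^G_{k,l}‖x − x_i‖₂].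 Then for every x ∈ ℝⁿ and every u ∈ ℝᵐ and every k: (f(x) + G(x)u)_k ∈ { φ + Σ_{l=1}^{m} γ_l u_l : φ ∈ 𝐟_k(x), γ_l ∈ 𝐆_{k,l}(x) }. In particular, every trajectory of ẋ = f(x) + G(x)u satisfies the differential inclusion ẋ(t)_k ∈ { φ + Σ_l γ_l u(t)_l : φ ∈ 𝐟_k(x(t)), γ_l ∈ 𝐆_{k,l}(x(t)) }. -/
open scoped BigOperators

theorem stmt5 (n m N : ℕ) (hn : 1 ≤ n) (hm : 1 ≤ m)
    (f : EuclideanSpace ℝ (Fin n) → Fin n → ℝ)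
    (G : EuclideanSpace ℝ (Fin n) → Fin n → Fin m → ℝ)
    (Lf : Fin n → ℝ) (LG : Fin n → Fin m → ℝ)
    (hLf : ∀ (k : Fin n) (x y : EuclideanSpace ℝ (Fin n)), |f x k - f y k| ≤ Lf k * ‖x - y‖)
    (hLG : ∀ (k : Fin n) (l : Fin m) (x y : EuclideanSpace ℝ (Fin n)),
      |G x k l - G y k l| ≤ LG k l * ‖x - y‖)
    (xs : Fin (N + 1) → EuclideanSpace ℝ (Fin n))
    (a b : Fin (N + 1) → Fin n → ℝ)
    (c d : Fin (N + 1) → Fin n → Fin m → ℝ)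
    (hab : ∀ i k, a i k ≤ b i k)
    (hcd : ∀ i k l, c i k l ≤ d i k l)
    (hfa : ∀ i k, f (xs i) k ∈ Set.Icc (a i k) (b i k))
    (hGc : ∀ i k l, G (xs i) k l ∈ Set.Icc (c i k l) (d i k l)) :
    ∀ (x : EuclideanSpace ℝ (Fin n)) (u : Fin m → ℝ) (k : Fin n),
      f x k + ∑ l, G x k l * u l ∈
        {y : ℝ | ∃ (φ : ℝ) (γ : Fin m → ℝ),
          (φ ∈ ⋂ i, Set.Icc (a i k - Lf k * ‖x - xs i‖) (b i k + Lf k * ‖x - xs i‖)) ∧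
          (∀ l, γ l ∈ ⋂ i, Set.Icc (c i k l - LG k l * ‖x - xs i‖) (d i k l + LG k l * ‖x - xs i‖)) ∧
          y = φ + ∑ l, γ l * u l} := by
  intro x u k
  refine ⟨f x k, fun l => G x k l, ?_, ?_, rfl⟩
  · refine Set.mem_iInter.2 fun i => ?_
    have h := abs_le.1 (hLf k x (xs i))
    have ha := (hfa i k).1
    have hb := (hfa i k).2
    constructor <;> linarith [h.1, h.2]
  · intro l
    refine Set.mem_iInter.2 fun i => ?_
    have h := abs_le.1 (hLG k l x (xs i))
    have hc := (hGc i k l).1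
    have hd := (hGc i k l).2
    constructor <;> linarith [h.1, h.2]
end

section
/- Let n, m ≥ 1 and let f : ℝⁿ → ℝⁿ and G : ℝⁿ → ℝ^{n×m} be continuously differentiable with each component f(·)_k Lipschitz with constant L^f_k and each entry G(·)_{k,l} Lipschitz with constant L^G_{k,l}, with respect to the Euclidean norm on ℝⁿ. Let Δt > 0, let u₀ ∈ ℝᵐ be a constant control with |（u₀)_l| ≤ Ū_l for each l, and let x : ℝ → ℝⁿ be differentiable on [t, t + Δt] with ẋ(s) = f(x(s)) + G(x(s))u₀ for all s ∈ [t, t + Δt]. Suppose real constants M^f_p ≥ 0 and M^G_{p,l} ≥ 0 satisfy |f(x(s))_p| ≤ M^f_p and |G(x(s))_{p,l}| ≤ M^G_{p,l} for all s ∈ [t, t + Δt], p ∈ {1,…,n}, l ∈ {1,…,m}. Then there exist a vector b ∈ ℝⁿ and a matrix A ∈ ℝ^{n×m} such that x(t + Δt) = b + A u₀, and for every k ∈ {1,…,n} and l ∈ {1,…,m}: | b_k − x(t)_k − Δt·f(x(t))_k | ≤ (Δt²/2)·L^f_k·Σ_{p=1}^{n} M^f_p, and | A_{k,l} − Δt·G(x(t))_{k,l}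 | ≤ (Δt²/2)·[ (L^f_k + Σ_{l'=1}^{m} Ū_{l'}·L^G_{k,l'})·Σ_{p=1}^{n} M^G_{p,l} + L^G_{k,l}·Σ_{p=1}^{n} M^f_p ]. -/
open scoped BigOperators
open intervalIntegral MeasureTheory

lemma my_ftc {a b : ℝ} (hab : a ≤ b) {g g' : ℝ → ℝ}
    (hg : ∀ s ∈ Set.Icc a b, HasDerivWithinAt g (g' s) (Set.Icc a b) s)
    (hcont : ContinuousOn g' (Set.Icc a b)) :
    ∫ s in a..b, g' s = g b - g a := by
  apply intervalIntegral.integral_eq_sub_of_hasDeriv_right_of_le hab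
  · exact fun s hs => (hg s hs).continuousWithinAt
  · intro s hs
    exact ((hg s (Set.Ioo_subset_Icc_self hs)).hasDerivAt
      (Icc_mem_nhds hs.1 hs.2)).hasDerivWithinAt
  · have h2 := hcont
    rw [← Set.uIcc_of_le hab] at h2
    exact h2.intervalIntegrable

lemma my_norm_le {n : ℕ} (w : EuclideanSpace ℝ (Fin n)) (c : Fin n → ℝ)
    (hc : ∀ p, |w p| ≤ c p) : ‖w‖ ≤ ∑ p, c p := by
  have hc0 : ∀ p, 0 ≤ c p := fun p => (abs_nonneg _).trans (hc p)
  rw [EuclideanSpace.norm_eq]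
  have h1 : ∑ p, ‖w p‖ ^ 2 ≤ (∑ p, c p) ^ 2 := by
    calc ∑ p, ‖w p‖ ^ 2 ≤ ∑ p, c p ^ 2 := Finset.sum_le_sum (fun p _ => by
            have h := hc p
            have h2 : ‖w p‖ = |w p| := Real.norm_eq_abs _
            nlinarith [abs_nonneg (w p)])
      _ ≤ (∑ p, c p) ^ 2 := Finset.sum_sq_le_sq_sum_of_nonneg (fun p _ => hc0 p)
  calc Real.sqrt (∑ p, ‖w p‖ ^ 2) ≤ Real.sqrt ((∑ p, c p) ^ 2) := Real.sqrt_le_sqrt h1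
    _ = ∑ p, c p := Real.sqrt_sq (Finset.sum_nonneg fun p _ => hc0 p)

lemma my_fderiv_bound {n : ℕ} {φ : EuclideanSpace ℝ (Fin n) → ℝ} {L : ℝ}
    (hL0 : 0 ≤ L) (hφ : Differentiable ℝ φ)
    (hL : ∀ x y, |φ x - φ y| ≤ L * ‖x - y‖) (y w : EuclideanSpace ℝ (Fin n)) :
    |fderiv ℝ φ y w| ≤ L * ‖w‖ := by
  have hlip : LipschitzWith L.toNNReal φ := by
    apply LipschitzWith.of_dist_le_mul
    intro a b
    rw [Real.dist_eq, Real.coe_toNNReal _ hL0, dist_eq_norm]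
    exact hL a b
  have h1 : ‖fderiv ℝ φ y‖ ≤ L := by
    have := (hφ y).hasFDerivAt.le_of_lipschitz hlip
    rwa [Real.coe_toNNReal _ hL0] at this
  calc |fderiv ℝ φ y w| ≤ ‖fderiv ℝ φ y‖ * ‖w‖ := (fderiv ℝ φ y).le_opNorm w
    _ ≤ L * ‖w‖ := by gcongr

lemma my_double_bound {a b C : ℝ} (hab : a ≤ b) (hC : 0 ≤ C) {h : ℝ → ℝ}
    (hcont : ContinuousOn h (Set.Icc a b)) (hbound : ∀ r ∈ Set.Icc a b, |h r| ≤ C) :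
    |∫ s in a..b, (∫ r in a..s, h r)| ≤ C * (b - a) ^ 2 / 2 := by
  have hb : ∀ᵐ s ∂(MeasureTheory.volume.restrict (Set.uIoc a b)),
      ‖∫ r in a..s, h r‖ ≤ C * (s - a) := by
    refine MeasureTheory.ae_restrict_of_forall_mem measurableSet_uIoc ?_
    intro s hs
    rw [Set.uIoc_of_le hab] at hs
    have hsub : Set.uIoc a s ⊆ Set.Icc a b := by
      rw [Set.uIoc_of_le hs.1.le]
      exact fun r hr => ⟨hr.1.le, hr.2.trans hs.2⟩
    have := intervalIntegral.norm_integral_le_of_norm_le_const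
      (f := h) (C := C) (a := a) (b := s) (fun r hr => (hbound r (hsub hr)).trans le_rfl)
    rwa [abs_of_nonneg (by linarith [hs.1.le] : (0:ℝ) ≤ s - a)] at this
  have hint : IntervalIntegrable (fun s => C * (s - a)) MeasureTheory.volume a b := by
    apply Continuous.intervalIntegrable; continuity
  have h1 := intervalIntegral.norm_integral_le_abs_of_norm_le hb hint
  have h2 : ∫ s in a..b, C * (s - a) = C * (b - a) ^ 2 / 2 := by
    rw [intervalIntegral.integral_const_mul]
    have h3 : ∫ s in a..b, (s - a) = (b - a) ^ 2 / 2 := by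
      rw [intervalIntegral.integral_comp_sub_right (fun u => u) a, integral_id]
      ring
    rw [h3]; ring
  rw [h2] at h1
  calc |∫ s in a..b, (∫ r in a..s, h r)| ≤ |C * (b - a) ^ 2 / 2| := h1
    _ = C * (b - a) ^ 2 / 2 := abs_of_nonneg (by positivity)

set_option maxHeartbeats 2000000 in
theorem stmt9 (n m : ℕ) (hn : 1 ≤ n) (hm : 1 ≤ m)
    (f : EuclideanSpace ℝ (Fin n) → EuclideanSpace ℝ (Fin n))
    (G : EuclideanSpace ℝ (Fin n) → Fin n → Fin m → ℝ)
    (hfC : ContDiff ℝ 1 f) (hGC : ContDiff ℝ 1 G)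
    (Lf : Fin n → ℝ) (LG : Fin n → Fin m → ℝ)
    (hLf : ∀ (k : Fin n) (x y : EuclideanSpace ℝ (Fin n)), |f x k - f y k| ≤ Lf k * ‖x - y‖)
    (hLG : ∀ (k : Fin n) (l : Fin m) (x y : EuclideanSpace ℝ (Fin n)),
      |G x k l - G y k l| ≤ LG k l * ‖x - y‖)
    (t Δt : ℝ) (hΔt : 0 < Δt)
    (u0 : Fin m → ℝ) (Ubar : Fin m → ℝ) (hU : ∀ l, |u0 l| ≤ Ubar l)
    (x : ℝ → EuclideanSpace ℝ (Fin n))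
    (hx : ∀ s ∈ Set.Icc t (t + Δt),
      HasDerivWithinAt x
        ((WithLp.toLp 2 (fun k => f (x s) k + ∑ l, G (x s) k l * u0 l) : EuclideanSpace ℝ (Fin n)))
        (Set.Icc t (t + Δt)) s)
    (Mf : Fin n → ℝ) (MG : Fin n → Fin m → ℝ)
    (hMf0 : ∀ p, 0 ≤ Mf p) (hMG0 : ∀ p l, 0 ≤ MG p l)
    (hMf : ∀ s ∈ Set.Icc t (t + Δt), ∀ p, |f (x s) p| ≤ Mf p)
    (hMG : ∀ s ∈ Set.Icc t (t + Δt), ∀ p l, |G (x s) p l| ≤ MG p l) :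
    ∃ (b : Fin n → ℝ) (A : Fin n → Fin m → ℝ),
      (∀ k, x (t + Δt) k = b k + ∑ l, A k l * u0 l) ∧
      (∀ k, |b k - x t k - Δt * f (x t) k| ≤ Δt ^ 2 / 2 * (Lf k * ∑ p, Mf p)) ∧
      (∀ k l, |A k l - Δt * G (x t) k l| ≤
        Δt ^ 2 / 2 *
          ((Lf k + ∑ l', Ubar l' * LG k l') * (∑ p, MG p l) + LG k l * ∑ p, Mf p)) := by
  classical
  have habT : t ≤ t + Δt := by linarith
  set I : Set ℝ := Set.Icc t (t + Δt) with hIdef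
  have htI : t ∈ I := ⟨le_rfl, habT⟩
  -- nonnegativity of Lipschitz constants
  have hy1 : (EuclideanSpace.single (⟨0, hn⟩ : Fin n) (1 : ℝ)) ≠ 0 := by
    intro h
    have := congrFun (congrArg (fun (z : EuclideanSpace ℝ (Fin n)) => (z : Fin n → ℝ)) h) ⟨0, hn⟩
    simp [EuclideanSpace.single_apply] at this
  have hynorm : 0 < ‖(EuclideanSpace.single (⟨0, hn⟩ : Fin n) (1 : ℝ)) - 0‖ := by
    rw [sub_zero]; exact norm_pos_iff.mpr hy1
  have hLf0 : ∀ k, 0 ≤ Lf k := by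
    intro k
    have h1 := (abs_nonneg _).trans (hLf k (EuclideanSpace.single (⟨0, hn⟩ : Fin n) (1 : ℝ)) 0)
    nlinarith
  have hLG0 : ∀ k l, 0 ≤ LG k l := by
    intro k l
    have h1 := (abs_nonneg _).trans (hLG k l (EuclideanSpace.single (⟨0, hn⟩ : Fin n) (1 : ℝ)) 0)
    nlinarith
  have hU0 : ∀ l, 0 ≤ Ubar l := fun l => (abs_nonneg _).trans (hU l)
  have hMfS : 0 ≤ ∑ p, Mf p := Finset.sum_nonneg fun p _ => hMf0 p
  have hMGS : ∀ l, 0 ≤ ∑ p, MG p l := fun l => Finset.sum_nonneg fun p _ => hMG0 p l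
  -- basic differentiability / continuity
  have hfd : Differentiable ℝ f := hfC.differentiable one_ne_zero
  have hGd : Differentiable ℝ G := hGC.differentiable one_ne_zero
  have hxc : ContinuousOn x I := fun s hs => (hx s hs).continuousWithinAt
  set v : ℝ → EuclideanSpace ℝ (Fin n) :=
    fun s => (WithLp.toLp 2 (fun k => f (x s) k + ∑ l, G (x s) k l * u0 l) : EuclideanSpace ℝ (Fin n)) with hv
  have hxd : ∀ s ∈ I, HasDerivWithinAt x (v s) I s := hx
  set F' : ℝ → (EuclideanSpace ℝ (Fin n) →L[ℝ] EuclideanSpace ℝ (Fin n)) :=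
    fun s => fderiv ℝ f (x s) with hF'
  set G' : ℝ → (EuclideanSpace ℝ (Fin n) →L[ℝ] (Fin n → Fin m → ℝ)) :=
    fun s => fderiv ℝ G (x s) with hG'
  have hF'c : ContinuousOn F' I := (hfC.continuous_fderiv one_ne_zero).comp_continuousOn hxc
  have hG'c : ContinuousOn G' I := (hGC.continuous_fderiv one_ne_zero).comp_continuousOn hxc
  set φ : ℝ → EuclideanSpace ℝ (Fin n) := fun r => f (x r) with hφ
  set γ : Fin m → ℝ → EuclideanSpace ℝ (Fin n) :=
    fun l r => (WithLp.toLp 2 (fun k => G (x r) k l) : EuclideanSpace ℝ (Fin n)) with hγ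
  have hφc : ContinuousOn φ I := hfd.continuous.comp_continuousOn hxc
  have hGxc : ContinuousOn (fun r => G (x r)) I := hGd.continuous.comp_continuousOn hxc
  have hγc : ∀ l, ContinuousOn (γ l) I := by
    intro l
    have h1 : ContinuousOn (fun r => (fun k => G (x r) k l : Fin n → ℝ)) I := by
      apply continuousOn_pi.2
      intro k
      exact ((continuous_apply l).comp (continuous_apply k)).comp_continuousOn hGxc
    exact (EuclideanSpace.equiv (Fin n) ℝ).symm.continuous.comp_continuousOn h1
  -- pointwise derivative-component bounds
  have hFb : ∀ (k : Fin n) (y w : EuclideanSpace ℝ (Fin n)), |fderiv ℝ f y w k| ≤ Lf k * ‖w‖ := by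
    intro k y w
    have hdiff : Differentiable ℝ (fun z => f z k) :=
      (EuclideanSpace.proj (𝕜 := ℝ) k).differentiable.comp hfd
    have hcomp : HasFDerivAt (fun z => f z k)
        ((EuclideanSpace.proj (𝕜 := ℝ) k).comp (fderiv ℝ f y)) y :=
      (EuclideanSpace.proj (𝕜 := ℝ) k).hasFDerivAt.comp y (hfd y).hasFDerivAt
    have hb := my_fderiv_bound (hLf0 k) hdiff (fun a c => hLf k a c) y w
    rw [hcomp.fderiv] at hb
    exact hb
  have hGb : ∀ (k : Fin n) (l : Fin m) (y w : EuclideanSpace ℝ (Fin n)),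
      |fderiv ℝ G y w k l| ≤ LG k l * ‖w‖ := by
    intro k l y w
    set π : (Fin n → Fin m → ℝ) →L[ℝ] ℝ :=
      (ContinuousLinearMap.proj (R := ℝ) (φ := fun _ : Fin m => ℝ) l).comp
        (ContinuousLinearMap.proj (R := ℝ) (φ := fun _ : Fin n => Fin m → ℝ) k) with hπ
    have hdiff : Differentiable ℝ (fun z => G z k l) := π.differentiable.comp hGd
    have hcomp : HasFDerivAt (fun z => G z k l) (π.comp (fderiv ℝ G y)) y :=
      π.hasFDerivAt.comp y (hGd y).hasFDerivAt
    have hb := my_fderiv_bound (hLG0 k l) hdiff (fun a c => hLG k l a c) y w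
    rw [hcomp.fderiv] at hb
    exact hb
  -- norm bounds on φ and γ along the trajectory
  have hφb : ∀ r ∈ I, ‖φ r‖ ≤ ∑ p, Mf p := fun r hr => my_norm_le _ _ (fun p => hMf r hr p)
  have hγb : ∀ (l : Fin m), ∀ r ∈ I, ‖γ l r‖ ≤ ∑ p, MG p l := by
    intro l r hr
    exact my_norm_le _ _ (fun p => hMG r hr p l)
  -- integrand functions
  set pF : Fin n → ℝ → ℝ := fun k r => F' r (φ r) k with hpF
  set pG : Fin n → Fin m → ℝ → ℝ := fun k l r => F' r (γ l r) k with hpG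
  set qF : Fin n → Fin m → ℝ → ℝ := fun k l r => G' r (φ r) k l with hqF
  set qG : Fin n → Fin m → Fin m → ℝ → ℝ := fun k l l' r => G' r (γ l' r) k l with hqG
  have hpFc : ∀ k, ContinuousOn (pF k) I := fun k =>
    ((EuclideanSpace.proj (𝕜 := ℝ) k).continuous.comp_continuousOn (hF'c.clm_apply hφc))
  have hpGc : ∀ k l, ContinuousOn (pG k l) I := fun k l =>
    ((EuclideanSpace.proj (𝕜 := ℝ) k).continuous.comp_continuousOn (hF'c.clm_apply (hγc l)))
  have hqFc : ∀ k l, ContinuousOn (qF k l) I := by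
    intro k l
    have h1 : ContinuousOn (fun r => G' r (φ r)) I := hG'c.clm_apply hφc
    have h2 : Continuous (fun w : Fin n → Fin m → ℝ => w k l) :=
      (continuous_apply l).comp (continuous_apply k)
    exact h2.comp_continuousOn h1
  have hqGc : ∀ k l l', ContinuousOn (qG k l l') I := by
    intro k l l'
    have h1 : ContinuousOn (fun r => G' r (γ l' r)) I := hG'c.clm_apply (hγc l')
    have h2 : Continuous (fun w : Fin n → Fin m → ℝ => w k l) :=
      (continuous_apply l).comp (continuous_apply k)
    exact h2.comp_continuousOn h1
  have hpFb : ∀ k, ∀ r ∈ I, |pF k r| ≤ Lf k * ∑ p, Mf p := by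
    intro k r hr
    exact (hFb k (x r) (φ r)).trans (by
      have := hφb r hr
      gcongr
      exact hLf0 k)
  have hpGb : ∀ k l, ∀ r ∈ I, |pG k l r| ≤ Lf k * ∑ p, MG p l := by
    intro k l r hr
    exact (hFb k (x r) (γ l r)).trans (by
      have := hγb l r hr
      gcongr
      exact hLf0 k)
  have hqFb : ∀ k l, ∀ r ∈ I, |qF k l r| ≤ LG k l * ∑ p, Mf p := by
    intro k l r hr
    exact (hGb k l (x r) (φ r)).trans (by
      have := hφb r hr
      gcongr
      exact hLG0 k l)
  have hqGb : ∀ k l l', ∀ r ∈ I, |qG k l l' r| ≤ LG k l * ∑ p, MG p l' := by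
    intro k l l' r hr
    exact (hGb k l (x r) (γ l' r)).trans (by
      have := hγb l' r hr
      gcongr
      exact hLG0 k l)
  -- decomposition of v
  have hsplit : ∀ s, v s = φ s + ∑ l, u0 l • γ l s := by
    intro s
    refine PiLp.ext fun k => ?_
    have h1 : (∑ l, u0 l • γ l s) k = ∑ l, u0 l * γ l s k := by
      change (EuclideanSpace.proj (𝕜 := ℝ) k) (∑ l, u0 l • γ l s) = _
      rw [map_sum]
      rfl
    show f (x s) k + ∑ l, G (x s) k l * u0 l = φ s k + (∑ l, u0 l • γ l s) k
    rw [h1]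
    simp [hφ, hγ, mul_comm]
  -- component splitting of the derivative terms
  have hFsplit : ∀ k s, F' s (v s) k = pF k s + ∑ l, u0 l * pG k l s := by
    intro k s
    have h0 : F' s (v s) = F' s (φ s) + ∑ l, u0 l • F' s (γ l s) := by
      rw [hsplit s, map_add, map_sum]
      simp
    have h1 : (∑ l, u0 l • F' s (γ l s)) k = ∑ l, u0 l * F' s (γ l s) k := by
      change (EuclideanSpace.proj (𝕜 := ℝ) k) (∑ l, u0 l • F' s (γ l s)) = _
      rw [map_sum]
      rfl
    calc F' s (v s) k = (F' s (φ s) + ∑ l, u0 l • F' s (γ l s)) k := by rw [h0]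
      _ = F' s (φ s) k + (∑ l, u0 l • F' s (γ l s)) k := rfl
      _ = pF k s + ∑ l, u0 l * pG k l s := by rw [h1]
  have hGsplit : ∀ k l s, G' s (v s) k l = qF k l s + ∑ l', u0 l' * qG k l l' s := by
    intro k l s
    have h0 : G' s (v s) = G' s (φ s) + ∑ l', u0 l' • G' s (γ l' s) := by
      rw [hsplit s, map_add, map_sum]
      simp
    calc G' s (v s) k l = (G' s (φ s) + ∑ l', u0 l' • G' s (γ l' s)) k l := by rw [h0]
      _ = G' s (φ s) k l + (∑ l', u0 l' • G' s (γ l' s)) k l := rfl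
      _ = qF k l s + ∑ l', u0 l' * qG k l l' s := by
          congr 1
          rw [Finset.sum_apply, Finset.sum_apply]
          simp
          rfl
  -- componentwise chain rules
  have hxk : ∀ k, ∀ s ∈ I, HasDerivWithinAt (fun τ => x τ k) (v s k) I s := by
    intro k s hs
    exact (EuclideanSpace.proj (𝕜 := ℝ) k).hasFDerivAt.comp_hasDerivWithinAt s (hxd s hs)
  have hfxk : ∀ k, ∀ s ∈ I, HasDerivWithinAt (fun τ => f (x τ) k) (F' s (v s) k) I s := by
    intro k s hs
    have h1 : HasDerivWithinAt (fun τ => f (x τ)) (F' s (v s)) I s :=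
      (hfd (x s)).hasFDerivAt.comp_hasDerivWithinAt s (hxd s hs)
    exact (EuclideanSpace.proj (𝕜 := ℝ) k).hasFDerivAt.comp_hasDerivWithinAt s h1
  have hGxkl : ∀ k l, ∀ s ∈ I, HasDerivWithinAt (fun τ => G (x τ) k l) (G' s (v s) k l) I s := by
    intro k l s hs
    have h1 : HasDerivWithinAt (fun τ => G (x τ)) (G' s (v s)) I s :=
      (hGd (x s)).hasFDerivAt.comp_hasDerivWithinAt s (hxd s hs)
    exact ((ContinuousLinearMap.proj (R := ℝ) (φ := fun _ : Fin m => ℝ) l).comp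
      (ContinuousLinearMap.proj (R := ℝ) (φ := fun _ : Fin n => Fin m → ℝ)
        k)).hasFDerivAt.comp_hasDerivWithinAt s h1
  have hvkc : ∀ k, ContinuousOn (fun s => v s k) I := by
    intro k
    have h1 : ContinuousOn (fun s => f (x s) k) I :=
      (EuclideanSpace.proj (𝕜 := ℝ) k).continuous.comp_continuousOn hφc
    have h2 : ContinuousOn (fun s => ∑ l, G (x s) k l * u0 l) I := by
      apply continuousOn_finset_sum
      intro l _
      exact (((continuous_apply l).comp (continuous_apply k)).comp_continuousOn hGxc).mul
        continuousOn_const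
    exact h1.add h2
  -- generic helpers
  have inner_ftc : ∀ (g g' : ℝ → ℝ), (∀ r ∈ I, HasDerivWithinAt g (g' r) I r) →
      ContinuousOn g' I → ∀ s ∈ I, ∫ r in t..s, g' r = g s - g t := by
    intro g g' hg hc s hs
    have hsub : Set.Icc t s ⊆ I := Set.Icc_subset_Icc le_rfl hs.2
    exact my_ftc hs.1 (fun r hr => (hg r (hsub hr)).mono hsub) (hc.mono hsub)
  have hii : ∀ {h : ℝ → ℝ}, ContinuousOn h I →
      IntervalIntegrable h MeasureTheory.volume t (t + Δt) := by
    intro h hc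
    have hc2 : ContinuousOn h (Set.uIcc t (t + Δt)) := by
      rw [Set.uIcc_of_le habT]; exact hc
    exact hc2.intervalIntegrable
  have hprim : ∀ {h : ℝ → ℝ}, ContinuousOn h I →
      ContinuousOn (fun s => ∫ r in t..s, h r) I := by
    intro h hc
    have h2 : Set.uIcc t (t + Δt) = I := Set.uIcc_of_le habT
    have h3 : MeasureTheory.IntegrableOn h (Set.uIcc t (t + Δt)) := by
      rw [h2]; exact hc.integrableOn_Icc
    have h4 := intervalIntegral.continuousOn_primitive_interval h3
    rwa [h2] at h4
  -- primitives
  set JpF : Fin n → ℝ → ℝ := fun k s => ∫ r in t..s, pF k r with hJpF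
  set JpG : Fin n → Fin m → ℝ → ℝ := fun k l s => ∫ r in t..s, pG k l r with hJpG
  set JqF : Fin n → Fin m → ℝ → ℝ := fun k l s => ∫ r in t..s, qF k l r with hJqF
  set JqG : Fin n → Fin m → Fin m → ℝ → ℝ := fun k l l' s => ∫ r in t..s, qG k l l' r with hJqG
  -- expansions along the trajectory
  have hfexp : ∀ k, ∀ s ∈ I, f (x s) k = f (x t) k + (JpF k s + ∑ l, u0 l * JpG k l s) := by
    intro k s hs
    have hcont : ContinuousOn (fun r => pF k r + ∑ l, u0 l * pG k l r) I :=
      (hpFc k).add (continuousOn_finset_sum _ fun l _ => continuousOn_const.mul (hpGc k l))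
    have hders : ∀ r ∈ I, HasDerivWithinAt (fun τ => f (x τ) k)
        (pF k r + ∑ l, u0 l * pG k l r) I r := by
      intro r hr
      have h1 := hfxk k r hr
      rwa [hFsplit k r] at h1
    have h1 := inner_ftc _ _ hders hcont s hs
    have hsub : Set.uIcc t s ⊆ I := by
      rw [Set.uIcc_of_le hs.1]; exact Set.Icc_subset_Icc le_rfl hs.2
    have h2 : ∫ r in t..s, (pF k r + ∑ l, u0 l * pG k l r)
        = JpF k s + ∑ l, u0 l * JpG k l s := by
      rw [intervalIntegral.integral_add (((hpFc k).mono hsub).intervalIntegrable)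
        (((continuousOn_finset_sum Finset.univ
          (fun l _ => continuousOn_const.fun_mul (hpGc k l))).mono hsub).intervalIntegrable),
        intervalIntegral.integral_finset_sum
          (fun l _ => ((continuousOn_const.fun_mul (hpGc k l)).mono hsub).intervalIntegrable)]
      simp only [intervalIntegral.integral_const_mul]
      rfl
    rw [h2] at h1
    linarith
  have hGexp : ∀ k l, ∀ s ∈ I, G (x s) k l
      = G (x t) k l + (JqF k l s + ∑ l', u0 l' * JqG k l l' s) := by
    intro k l s hs
    have hcont : ContinuousOn (fun r => qF k l r + ∑ l', u0 l' * qG k l l' r) I :=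
      (hqFc k l).add (continuousOn_finset_sum _ fun l' _ => continuousOn_const.mul (hqGc k l l'))
    have hders : ∀ r ∈ I, HasDerivWithinAt (fun τ => G (x τ) k l)
        (qF k l r + ∑ l', u0 l' * qG k l l' r) I r := by
      intro r hr
      have h1 := hGxkl k l r hr
      rwa [hGsplit k l r] at h1
    have h1 := inner_ftc _ _ hders hcont s hs
    have hsub : Set.uIcc t s ⊆ I := by
      rw [Set.uIcc_of_le hs.1]; exact Set.Icc_subset_Icc le_rfl hs.2
    have h2 : ∫ r in t..s, (qF k l r + ∑ l', u0 l' * qG k l l' r)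
        = JqF k l s + ∑ l', u0 l' * JqG k l l' s := by
      rw [intervalIntegral.integral_add (((hqFc k l).mono hsub).intervalIntegrable)
        (((continuousOn_finset_sum Finset.univ
          (fun l' _ => continuousOn_const.fun_mul (hqGc k l l'))).mono hsub).intervalIntegrable),
        intervalIntegral.integral_finset_sum
          (fun l' _ => ((continuousOn_const.fun_mul (hqGc k l l')).mono hsub).intervalIntegrable)]
      simp only [intervalIntegral.integral_const_mul]
      rfl
    rw [h2] at h1
    linarith
  -- outer integrals
  set DpF : Fin n → ℝ := fun k => ∫ s in t..(t + Δt), JpF k s with hDpF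
  set DpG : Fin n → Fin m → ℝ := fun k l => ∫ s in t..(t + Δt), JpG k l s with hDpG
  set DqF : Fin n → Fin m → ℝ := fun k l => ∫ s in t..(t + Δt), JqF k l s with hDqF
  set DqG : Fin n → Fin m → Fin m → ℝ :=
    fun k l l' => ∫ s in t..(t + Δt), JqG k l l' s with hDqG
  have hTT : t + Δt - t = Δt := by ring
  -- double-integral bounds
  have hbDpF : ∀ k, |DpF k| ≤ Δt ^ 2 / 2 * (Lf k * ∑ p, Mf p) := by
    intro k
    have h1 := my_double_bound habT (mul_nonneg (hLf0 k) hMfS) (hpFc k) (hpFb k)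
    rw [hTT] at h1
    calc |DpF k| ≤ (Lf k * ∑ p, Mf p) * Δt ^ 2 / 2 := h1
      _ = Δt ^ 2 / 2 * (Lf k * ∑ p, Mf p) := by ring
  have hbDpG : ∀ k l, |DpG k l| ≤ Δt ^ 2 / 2 * (Lf k * ∑ p, MG p l) := by
    intro k l
    have h1 := my_double_bound habT (mul_nonneg (hLf0 k) (hMGS l)) (hpGc k l) (hpGb k l)
    rw [hTT] at h1
    calc |DpG k l| ≤ (Lf k * ∑ p, MG p l) * Δt ^ 2 / 2 := h1
      _ = Δt ^ 2 / 2 * (Lf k * ∑ p, MG p l) := by ring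
  have hbDqF : ∀ k l, |DqF k l| ≤ Δt ^ 2 / 2 * (LG k l * ∑ p, Mf p) := by
    intro k l
    have h1 := my_double_bound habT (mul_nonneg (hLG0 k l) hMfS) (hqFc k l) (hqFb k l)
    rw [hTT] at h1
    calc |DqF k l| ≤ (LG k l * ∑ p, Mf p) * Δt ^ 2 / 2 := h1
      _ = Δt ^ 2 / 2 * (LG k l * ∑ p, Mf p) := by ring
  have hbDqG : ∀ k l l', |DqG k l l'| ≤ Δt ^ 2 / 2 * (LG k l * ∑ p, MG p l') := by
    intro k l l'
    have h1 := my_double_bound habT (mul_nonneg (hLG0 k l) (hMGS l')) (hqGc k l l')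
      (hqGb k l l')
    rw [hTT] at h1
    calc |DqG k l l'| ≤ (LG k l * ∑ p, MG p l') * Δt ^ 2 / 2 := h1
      _ = Δt ^ 2 / 2 * (LG k l * ∑ p, MG p l') := by ring
  refine ⟨fun k => x t k + Δt * f (x t) k + DpF k,
    fun k l => Δt * G (x t) k l + DpG k l + DqF k l + ∑ l', u0 l' * DqG k l' l, ?_, ?_, ?_⟩
  · -- the exact decomposition
    intro k
    have hTmem : t + Δt ∈ I := ⟨habT, le_rfl⟩
    have h0 := inner_ftc (fun τ => x τ k) (fun s => v s k) (hxk k) (hvkc k) (t + Δt) hTmem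
    have hf_int : ∫ s in t..(t + Δt), f (x s) k
        = Δt * f (x t) k + DpF k + ∑ l, u0 l * DpG k l := by
      have he : Set.EqOn (fun s => f (x s) k)
          (fun s => f (x t) k + (JpF k s + ∑ l, u0 l * JpG k l s)) (Set.uIcc t (t + Δt)) := by
        intro s hs
        rw [Set.uIcc_of_le habT] at hs
        exact hfexp k s hs
      rw [intervalIntegral.integral_congr he,
        intervalIntegral.integral_add (hii continuousOn_const)
          (hii ((hprim (hpFc k)).fun_add (continuousOn_finset_sum Finset.univ
            (fun l _ => continuousOn_const.fun_mul (hprim (hpGc k l)))))),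
        intervalIntegral.integral_add (hii (hprim (hpFc k)))
          (hii (continuousOn_finset_sum Finset.univ
            (fun l _ => continuousOn_const.fun_mul (hprim (hpGc k l))))),
        intervalIntegral.integral_finset_sum
          (fun l _ => hii (continuousOn_const.fun_mul (hprim (hpGc k l))))]
      simp only [intervalIntegral.integral_const_mul, intervalIntegral.integral_const,
        smul_eq_mul, hTT]
      ring
    have hG_int : ∀ l, ∫ s in t..(t + Δt), G (x s) k l
        = Δt * G (x t) k l + DqF k l + ∑ l', u0 l' * DqG k l l' := by
      intro l
      have he : Set.EqOn (fun s => G (x s) k l)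
          (fun s => G (x t) k l + (JqF k l s + ∑ l', u0 l' * JqG k l l' s))
          (Set.uIcc t (t + Δt)) := by
        intro s hs
        rw [Set.uIcc_of_le habT] at hs
        exact hGexp k l s hs
      rw [intervalIntegral.integral_congr he,
        intervalIntegral.integral_add (hii continuousOn_const)
          (hii ((hprim (hqFc k l)).fun_add (continuousOn_finset_sum Finset.univ
            (fun l' _ => continuousOn_const.fun_mul (hprim (hqGc k l l')))))),
        intervalIntegral.integral_add (hii (hprim (hqFc k l)))
          (hii (continuousOn_finset_sum Finset.univ
            (fun l' _ => continuousOn_const.fun_mul (hprim (hqGc k l l'))))),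
        intervalIntegral.integral_finset_sum
          (fun l' _ => hii (continuousOn_const.fun_mul (hprim (hqGc k l l'))))]
      simp only [intervalIntegral.integral_const_mul, intervalIntegral.integral_const,
        smul_eq_mul, hTT]
      ring
    have hsplit_int : ∫ s in t..(t + Δt), v s k
        = (∫ s in t..(t + Δt), f (x s) k)
          + ∑ l, (∫ s in t..(t + Δt), G (x s) k l) * u0 l := by
      have h1 : (fun s => v s k) = fun s => f (x s) k + ∑ l, G (x s) k l * u0 l := rfl
      have hIf : IntervalIntegrable (fun s => f (x s) k) MeasureTheory.volume t (t + Δt) :=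
        hii ((EuclideanSpace.proj (𝕜 := ℝ) k).continuous.comp_continuousOn hφc)
      have hIG : ∀ l, IntervalIntegrable (fun s => G (x s) k l * u0 l)
          MeasureTheory.volume t (t + Δt) := fun l =>
        hii ((((continuous_apply l).comp (continuous_apply k)).comp_continuousOn hGxc).mul
          continuousOn_const)
      have hIGsum : IntervalIntegrable (fun s => ∑ l, G (x s) k l * u0 l)
          MeasureTheory.volume t (t + Δt) :=
        hii (continuousOn_finset_sum Finset.univ (fun l _ =>
          ((((continuous_apply l).comp (continuous_apply k)).comp_continuousOn hGxc).mul
            continuousOn_const)))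
      rw [h1, intervalIntegral.integral_add hIf hIGsum,
        intervalIntegral.integral_finset_sum (fun l _ => hIG l)]
      simp only [intervalIntegral.integral_mul_const]
    have hswap : ∑ l, (∑ l', u0 l' * DqG k l l') * u0 l
        = ∑ l, (∑ l', u0 l' * DqG k l' l) * u0 l := by
      simp_rw [Finset.sum_mul]
      rw [Finset.sum_comm]
      exact Finset.sum_congr rfl fun l _ => Finset.sum_congr rfl fun l' _ => by ring
    calc x (t + Δt) k = x t k + ∫ s in t..(t + Δt), v s k := by linarith
      _ = x t k + ((∫ s in t..(t + Δt), f (x s) k)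
          + ∑ l, (∫ s in t..(t + Δt), G (x s) k l) * u0 l) := by rw [hsplit_int]
      _ = x t k + ((Δt * f (x t) k + DpF k + ∑ l, u0 l * DpG k l)
          + ∑ l, (Δt * G (x t) k l + DqF k l + ∑ l', u0 l' * DqG k l l') * u0 l) := by
          rw [hf_int]
          congr 1
          congr 1
          exact Finset.sum_congr rfl fun l _ => by rw [hG_int l]
      _ = x t k + Δt * f (x t) k + DpF k
          + ∑ l, (Δt * G (x t) k l + DpG k l + DqF k l + ∑ l', u0 l' * DqG k l' l) * u0 l := by
          simp_rw [add_mul, Finset.sum_add_distrib]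
          have e1 : ∑ l, u0 l * DpG k l = ∑ l, DpG k l * u0 l :=
            Finset.sum_congr rfl fun l _ => mul_comm _ _
          linarith [hswap, e1]
  · -- bound on b
    intro k
    have h1 : x t k + Δt * f (x t) k + DpF k - x t k - Δt * f (x t) k = DpF k := by ring
    rw [h1]
    exact hbDpF k
  · -- bound on A
    intro k l
    have h1 : Δt * G (x t) k l + DpG k l + DqF k l + (∑ l', u0 l' * DqG k l' l)
        - Δt * G (x t) k l = DpG k l + DqF k l + ∑ l', u0 l' * DqG k l' l := by ring
    rw [h1]
    have hb3 : |∑ l', u0 l' * DqG k l' l|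
        ≤ Δt ^ 2 / 2 * ((∑ l', Ubar l' * LG k l') * ∑ p, MG p l) := by
      calc |∑ l', u0 l' * DqG k l' l| ≤ ∑ l', |u0 l' * DqG k l' l| :=
            Finset.abs_sum_le_sum_abs _ _
        _ ≤ ∑ l', Ubar l' * (Δt ^ 2 / 2 * (LG k l' * ∑ p, MG p l)) := by
            apply Finset.sum_le_sum
            intro l' _
            rw [abs_mul]
            exact mul_le_mul (hU l') (hbDqG k l' l) (abs_nonneg _) (hU0 l')
        _ = Δt ^ 2 / 2 * ((∑ l', Ubar l' * LG k l') * ∑ p, MG p l) := by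
            rw [Finset.sum_mul, Finset.mul_sum]
            exact Finset.sum_congr rfl fun l' _ => by ring
    have h2 := abs_add_three (DpG k l) (DqF k l) (∑ l', u0 l' * DqG k l' l)
    have h3 := hbDpG k l
    have h4 := hbDqF k l
    calc |DpG k l + DqF k l + ∑ l', u0 l' * DqG k l' l|
        ≤ |DpG k l| + |DqF k l| + |∑ l', u0 l' * DqG k l' l| := h2
      _ ≤ Δt ^ 2 / 2 * (Lf k * ∑ p, MG p l) + Δt ^ 2 / 2 * (LG k l * ∑ p, Mf p)
          + Δt ^ 2 / 2 * ((∑ l', Ubar l' * LG k l') * ∑ p, MG p l) := by linarith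
      _ = Δt ^ 2 / 2 * ((Lf k + ∑ l', Ubar l' * LG k l') * (∑ p, MG p l)
          + LG k l * ∑ p, Mf p) := by ring
end

section
/- Let n, m ≥ 1 and let f : ℝⁿ → ℝⁿ and G : ℝⁿ → ℝ^{n×m} be continuously differentiable with each component f(·)_k Lipschitz with constant L^f_k and each entry G(·)_{k,l} Lipschitz with constant L^G_{k,l}, with respect to the Euclidean norm on ℝⁿ. Let Δt > 0, let u₀ ∈ ℝᵐ be a constant control with |(u₀)_l| ≤ Ū_l for each l, and let x : ℝ → ℝⁿ be differentiable on [t, t + Δt] with ẋ(s) = f(x(s)) + G(x(s))u₀ for all s ∈ [t, t + Δt]. Suppose |f(x(s))_p| ≤ M^f_p and |G(x(s))_{p,l}| ≤ M^G_{p,l} for all s ∈ [t, t + Δt] and all p, l. Then there exist b ∈ ℝⁿ and A ∈ ℝ^{n×m} such that x(t + Δt) = b + A u₀, and for every k and l: | b_k − x(t)_k − Δt·f(x(t))_k | ≤ (Δt²/2)·L^f_k·Σ_{p=1}^{n} M^f_p, and | A_{k,l} − Δt·G(x(t))_{k,l} | ≤ (Δt²/2)·[ L^f_k·Σ_{p=1}^{n}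 M^G_{p,l} + L^G_{k,l}·( Σ_{p=1}^{n} M^f_p + Σ_{p=1}^{n} Σ_{l'=1}^{m} M^G_{p,l'}·Ū_{l'} ) ]. -/
open scoped BigOperators

private lemma clamp_aux {c D E : ℝ} (hc : 0 ≤ c) (hD : 0 ≤ D) (hE : |E| ≤ c + D) :
    |min c (max (-c) E)| ≤ c ∧ |E - min c (max (-c) E)| ≤ D := by
  rw [abs_le] at hE
  constructor
  · exact abs_le.2 ⟨le_min (by linarith) (le_max_left _ _), min_le_left _ _⟩
  · rcases le_total E c with h1 | h1
    · rcases le_total (-c) E with h2 | h2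
      · rw [max_eq_right h2, min_eq_right h1]; simpa using hD
      · rw [max_eq_left h2, min_eq_right (by linarith : -c ≤ c), abs_le]
        constructor <;> linarith
    · rw [max_eq_right (by linarith : -c ≤ E), min_eq_left h1, abs_le]
      constructor <;> linarith

private lemma l2_le_l1 {n : ℕ} (v : EuclideanSpace ℝ (Fin n)) : ‖v‖ ≤ ∑ p, |v p| := by
  rw [EuclideanSpace.norm_eq]
  have h1 : ∑ p, ‖v p‖ ^ 2 ≤ (∑ p, |v p|) ^ 2 := by
    simpa [Real.norm_eq_abs] using
      Finset.sum_sq_le_sq_sum_of_nonneg (f := fun p => |v p|)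
        (fun i _ => abs_nonneg (v i)) (s := Finset.univ)
  calc Real.sqrt (∑ p, ‖v p‖ ^ 2) ≤ Real.sqrt ((∑ p, |v p|) ^ 2) := Real.sqrt_le_sqrt h1
  _ = ∑ p, |v p| := Real.sqrt_sq (Finset.sum_nonneg fun i _ => abs_nonneg _)

set_option maxHeartbeats 2000000 in
theorem stmt10 (n m : ℕ) (hn : 1 ≤ n) (hm : 1 ≤ m)
    (f : EuclideanSpace ℝ (Fin n) → EuclideanSpace ℝ (Fin n))
    (G : EuclideanSpace ℝ (Fin n) → Fin n → Fin m → ℝ)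
    (hfC : ContDiff ℝ 1 f) (hGC : ContDiff ℝ 1 G)
    (Lf : Fin n → ℝ) (LG : Fin n → Fin m → ℝ)
    (hLf : ∀ (k : Fin n) (x y : EuclideanSpace ℝ (Fin n)), |f x k - f y k| ≤ Lf k * ‖x - y‖)
    (hLG : ∀ (k : Fin n) (l : Fin m) (x y : EuclideanSpace ℝ (Fin n)),
      |G x k l - G y k l| ≤ LG k l * ‖x - y‖)
    (t Δt : ℝ) (hΔt : 0 < Δt)
    (u0 : Fin m → ℝ) (Ubar : Fin m → ℝ) (hU : ∀ l, |u0 l| ≤ Ubar l)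
    (x : ℝ → EuclideanSpace ℝ (Fin n))
    (hx : ∀ s ∈ Set.Icc t (t + Δt),
      HasDerivWithinAt x
        ((WithLp.toLp 2 (fun k => f (x s) k + ∑ l, G (x s) k l * u0 l) : EuclideanSpace ℝ (Fin n)))
        (Set.Icc t (t + Δt)) s)
    (Mf : Fin n → ℝ) (MG : Fin n → Fin m → ℝ)
    (hMf0 : ∀ p, 0 ≤ Mf p) (hMG0 : ∀ p l, 0 ≤ MG p l)
    (hMf : ∀ s ∈ Set.Icc t (t + Δt), ∀ p, |f (x s) p| ≤ Mf p)
    (hMG : ∀ s ∈ Set.Icc t (t + Δt), ∀ p l, |G (x s) p l| ≤ MG p l) :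
    ∃ (b : Fin n → ℝ) (A : Fin n → Fin m → ℝ),
      (∀ k, x (t + Δt) k = b k + ∑ l, A k l * u0 l) ∧
      (∀ k, |b k - x t k - Δt * f (x t) k| ≤ Δt ^ 2 / 2 * (Lf k * ∑ p, Mf p)) ∧
      (∀ k l, |A k l - Δt * G (x t) k l| ≤
        Δt ^ 2 / 2 *
          (Lf k * (∑ p, MG p l) +
            LG k l * ((∑ p, Mf p) + ∑ p, ∑ l', MG p l' * Ubar l'))) := by
  set T := t + Δt with hT
  have htT : t ≤ T := by simp [hT]; linarith
  have hmemt : t ∈ Set.Icc t T := Set.left_mem_Icc.2 htT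
  have hmemT : T ∈ Set.Icc t T := Set.right_mem_Icc.2 htT
  have hIcc : Set.uIcc t T = Set.Icc t T := Set.uIcc_of_le htT
  -- Lipschitz constants are nonnegative
  have hvone : ∃ v w : EuclideanSpace ℝ (Fin n), ‖v - w‖ = 1 := by
    refine ⟨EuclideanSpace.single ⟨0, hn⟩ (1 : ℝ), 0, ?_⟩
    rw [sub_zero, EuclideanSpace.norm_single]; norm_num
  obtain ⟨v, w, hvw⟩ := hvone
  have hLf0 : ∀ k, 0 ≤ Lf k := fun k => by
    have := hLf k v w; rw [hvw, mul_one] at this; exact le_trans (abs_nonneg _) this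
  have hLG0 : ∀ k l, 0 ≤ LG k l := fun k l => by
    have := hLG k l v w; rw [hvw, mul_one] at this; exact le_trans (abs_nonneg _) this
  have hU0 : ∀ l, 0 ≤ Ubar l := fun l => le_trans (abs_nonneg _) (hU l)
  -- abbreviations
  set g : Fin m → ℝ := fun l => ∑ p, MG p l with hgdef
  set S : ℝ := ∑ l, g l * |u0 l| with hSdef
  set C : ℝ := (∑ p, Mf p) + S with hCdef
  have hg0 : ∀ l, 0 ≤ g l := fun l => Finset.sum_nonneg fun p _ => hMG0 p l
  have hS0 : 0 ≤ S := Finset.sum_nonneg fun l _ => mul_nonneg (hg0 l) (abs_nonneg _)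
  have hMfS0 : 0 ≤ ∑ p, Mf p := Finset.sum_nonneg fun p _ => hMf0 p
  -- bound on the norm of the derivative
  set d : ℝ → EuclideanSpace ℝ (Fin n) :=
    fun s => WithLp.toLp 2 (fun k => f (x s) k + ∑ l, G (x s) k l * u0 l) with hddef
  have hdb : ∀ s ∈ Set.Icc t T, ‖d s‖ ≤ C := by
    intro s hs
    refine le_trans (l2_le_l1 (d s)) ?_
    have hsum : ∀ p : Fin n, |f (x s) p + ∑ l, G (x s) p l * u0 l| ≤
        Mf p + ∑ l, MG p l * |u0 l| := by
      intro p
      refine le_trans (abs_add_le _ _) (add_le_add (hMf s hs p) ?_)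
      refine le_trans (Finset.abs_sum_le_sum_abs _ _) (Finset.sum_le_sum fun l _ => ?_)
      rw [abs_mul]
      exact mul_le_mul_of_nonneg_right (hMG s hs p l) (abs_nonneg _)
    calc (∑ p, |d s p|)
        ≤ ∑ p, (Mf p + ∑ l, MG p l * |u0 l|) := Finset.sum_le_sum fun p _ => hsum p
      _ = C := by
          rw [Finset.sum_add_distrib, hCdef, hSdef, Finset.sum_comm]
          congr 1
          exact Finset.sum_congr rfl fun l _ => by rw [hgdef, Finset.sum_mul]
  -- distance bound
  have hxd : ∀ s ∈ Set.Icc t T, ‖x s - x t‖ ≤ C * (s - t) := by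
    intro s hs
    have := (convex_Icc t T).norm_image_sub_le_of_norm_hasDerivWithin_le
      (f' := d) (fun s hs => hx s hs) hdb hmemt hs
    rwa [Real.norm_eq_abs, abs_of_nonneg (by linarith [hs.1])] at this
  -- continuity
  have hxc : ContinuousOn x (Set.Icc t T) := fun s hs => (hx s hs).continuousWithinAt
  have hfc : ∀ k, ContinuousOn (fun s => f (x s) k) (Set.Icc t T) := fun k =>
    (EuclideanSpace.proj k).continuous.comp_continuousOn (hfC.continuous.comp_continuousOn hxc)
  have hGc : ∀ k l, ContinuousOn (fun s => G (x s) k l) (Set.Icc t T) := by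
    intro k l
    have : Continuous (fun y => G y k l) := by
      have := hGC.continuous
      exact (((continuous_apply l).comp (continuous_apply k)).comp this)
    exact this.comp_continuousOn hxc
  have hdc : ∀ k, ContinuousOn (fun s => f (x s) k + ∑ l, G (x s) k l * u0 l)
      (Set.Icc t T) := fun k =>
    (hfc k).add (continuousOn_finset_sum _ fun l _ => (hGc k l).mul continuousOn_const)
  have hfint : ∀ k, IntervalIntegrable (fun s => f (x s) k) MeasureTheory.volume t T :=
    fun k => ((hfc k).mono (le_of_eq hIcc)).intervalIntegrable
  have hGint : ∀ k l, IntervalIntegrable (fun s => G (x s) k l) MeasureTheory.volume t T :=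
    fun k l => ((hGc k l).mono (le_of_eq hIcc)).intervalIntegrable
  -- componentwise derivative
  have hxk : ∀ k, ∀ s ∈ Set.Icc t T, HasDerivWithinAt (fun s => x s k)
      (f (x s) k + ∑ l, G (x s) k l * u0 l) (Set.Icc t T) s := by
    intro k s hs
    exact (EuclideanSpace.proj k).hasFDerivAt.comp_hasDerivWithinAt s (hx s hs)
  -- FTC componentwise
  have hftc : ∀ k, (∫ s in t..T, (f (x s) k + ∑ l, G (x s) k l * u0 l)) = x T k - x t k := by
    intro k
    refine intervalIntegral.integral_eq_sub_of_hasDeriv_right_of_le htT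
      ((EuclideanSpace.proj k).continuous.comp_continuousOn hxc) (fun s hs => ?_)
      (((hdc k).mono (le_of_eq hIcc)).intervalIntegrable)
    exact (hxk k s (Set.mem_Icc_of_Ioo hs)).mono_of_mem_nhdsWithin
      (mem_nhdsWithin_of_mem_nhds (Icc_mem_nhds hs.1 hs.2))
  -- split the integral
  have hsplit : ∀ k, x T k = x t k + (∫ s in t..T, f (x s) k)
      + ∑ l, (∫ s in t..T, G (x s) k l) * u0 l := by
    intro k
    have hg2 : IntervalIntegrable (fun s => ∑ l, G (x s) k l * u0 l)
        MeasureTheory.volume t T :=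
      ((continuousOn_finset_sum Finset.univ fun l _ =>
        (hGc k l).mul continuousOn_const).mono (le_of_eq hIcc)).intervalIntegrable
    have hadd : (∫ s in t..T, (f (x s) k + ∑ l, G (x s) k l * u0 l))
        = (∫ s in t..T, f (x s) k) + ∫ s in t..T, ∑ l, G (x s) k l * u0 l :=
      intervalIntegral.integral_add (hfint k) hg2
    have hsum : (∫ s in t..T, ∑ l, G (x s) k l * u0 l)
        = ∑ l, ∫ s in t..T, G (x s) k l * u0 l :=
      intervalIntegral.integral_finset_sum (f := fun l s => G (x s) k l * u0 l)
        (fun l _ => (hGint k l).mul_const (u0 l))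
    have h1 : (∫ s in t..T, (f (x s) k + ∑ l, G (x s) k l * u0 l))
        = (∫ s in t..T, f (x s) k) + ∑ l, (∫ s in t..T, G (x s) k l) * u0 l := by
      rw [hadd, hsum]
      congr 1
      exact Finset.sum_congr rfl fun l _ => intervalIntegral.integral_mul_const _ _
    have := hftc k
    rw [h1] at this
    linarith [this]
  -- generic integral bound
  have hIb : ∀ (φ : ℝ → ℝ) (c : ℝ), ContinuousOn φ (Set.Icc t T) → 0 ≤ c →
      (∀ s ∈ Set.Icc t T, |φ s| ≤ c * (s - t)) →
      |∫ s in t..T, φ s| ≤ c * (Δt ^ 2 / 2) := by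
    intro φ c hφc hc hφ
    have h1 : |∫ s in t..T, φ s| ≤ ∫ s in t..T, |φ s| :=
      intervalIntegral.abs_integral_le_integral_abs htT
    have h2 : (∫ s in t..T, |φ s|) ≤ ∫ s in t..T, c * (s - t) := by
      refine intervalIntegral.integral_mono_on htT
        ((hφc.abs.mono (le_of_eq hIcc)).intervalIntegrable) ?_ hφ
      exact (continuousOn_const.mul (continuousOn_id.sub continuousOn_const)).mono
        (le_of_eq hIcc) |>.intervalIntegrable
    have h3 : (∫ s in t..T, c * (s - t)) = c * (Δt ^ 2 / 2) := by
      rw [intervalIntegral.integral_const_mul]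
      congr 1
      rw [intervalIntegral.integral_sub intervalIntegral.intervalIntegrable_id intervalIntegrable_const,
        integral_id, intervalIntegral.integral_const, smul_eq_mul, hT]
      ring
    linarith
  -- bounds on the two integral errors
  set E : Fin n → ℝ := fun k => (∫ s in t..T, f (x s) k) - Δt * f (x t) k with hEdef
  have hEb : ∀ k, |E k| ≤ Δt ^ 2 / 2 * (Lf k * ∑ p, Mf p) + Δt ^ 2 / 2 * (Lf k * S) := by
    intro k
    have heq : E k = ∫ s in t..T, (f (x s) k - f (x t) k) := by
      rw [hEdef, intervalIntegral.integral_sub (hfint k) intervalIntegrable_const,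
        intervalIntegral.integral_const, smul_eq_mul, hT]
      ring_nf
    have := hIb (fun s => f (x s) k - f (x t) k) (Lf k * C)
      ((hfc k).sub continuousOn_const) (mul_nonneg (hLf0 k) (by rw [hCdef]; exact add_nonneg hMfS0 hS0))
      (fun s hs => by
        calc |f (x s) k - f (x t) k| ≤ Lf k * ‖x s - x t‖ := hLf k (x s) (x t)
        _ ≤ Lf k * (C * (s - t)) := mul_le_mul_of_nonneg_left (hxd s hs) (hLf0 k)
        _ = Lf k * C * (s - t) := by ring)
    rw [← heq] at this
    calc |E k| ≤ Lf k * C * (Δt ^ 2 / 2) := this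
    _ = Δt ^ 2 / 2 * (Lf k * ∑ p, Mf p) + Δt ^ 2 / 2 * (Lf k * S) := by rw [hCdef]; ring
  have hEGb : ∀ k l, |(∫ s in t..T, G (x s) k l) - Δt * G (x t) k l|
      ≤ Δt ^ 2 / 2 * (LG k l * C) := by
    intro k l
    have heq : (∫ s in t..T, G (x s) k l) - Δt * G (x t) k l
        = ∫ s in t..T, (G (x s) k l - G (x t) k l) := by
      rw [intervalIntegral.integral_sub (hGint k l) intervalIntegrable_const,
        intervalIntegral.integral_const, smul_eq_mul, hT]
      ring_nf
    have := hIb (fun s => G (x s) k l - G (x t) k l) (LG k l * C)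
      ((hGc k l).sub continuousOn_const) (mul_nonneg (hLG0 k l) (by rw [hCdef]; exact add_nonneg hMfS0 hS0))
      (fun s hs => by
        calc |G (x s) k l - G (x t) k l| ≤ LG k l * ‖x s - x t‖ := hLG k l (x s) (x t)
        _ ≤ LG k l * (C * (s - t)) := mul_le_mul_of_nonneg_left (hxd s hs) (hLG0 k l)
        _ = LG k l * C * (s - t) := by ring)
    rw [← heq] at this
    calc |(∫ s in t..T, G (x s) k l) - Δt * G (x t) k l| ≤ LG k l * C * (Δt ^ 2 / 2) := this
    _ = Δt ^ 2 / 2 * (LG k l * C) := by ring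
  -- clamping
  set cap : Fin n → ℝ := fun k => Δt ^ 2 / 2 * (Lf k * ∑ p, Mf p) with hcapdef
  set D : Fin n → ℝ := fun k => Δt ^ 2 / 2 * (Lf k * S) with hDdef
  have hcap0 : ∀ k, 0 ≤ cap k := fun k => by
    exact mul_nonneg (by positivity) (mul_nonneg (hLf0 k) hMfS0)
  have hD0 : ∀ k, 0 ≤ D k := fun k => by
    exact mul_nonneg (by positivity) (mul_nonneg (hLf0 k) hS0)
  set cl : Fin n → ℝ := fun k => min (cap k) (max (-(cap k)) (E k)) with hcldef
  set R : Fin n → ℝ := fun k => E k - cl k with hRdef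
  have hclamp : ∀ k, |cl k| ≤ cap k ∧ |R k| ≤ D k := fun k =>
    clamp_aux (hcap0 k) (hD0 k) (hEb k)
  -- the decomposition
  refine ⟨fun k => x t k + Δt * f (x t) k + cl k,
    fun k l => (∫ s in t..T, G (x s) k l) + R k * g l * |u0 l| / (S * u0 l), ?_, ?_, ?_⟩
  · -- exactness
    intro k
    have hextra : (∑ l, (R k * g l * |u0 l| / (S * u0 l)) * u0 l) = R k := by
      by_cases hS : S = 0
      · have hR0 : R k = 0 := by
          have := (hclamp k).2
          rw [hDdef] at this
          simp only [hS, mul_zero, zero_mul] at this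
          simpa [abs_nonpos_iff] using this
        simp [hR0]
      · have hterm : ∀ l : Fin m, (R k * g l * |u0 l| / (S * u0 l)) * u0 l
            = R k / S * (g l * |u0 l|) := by
          intro l
          by_cases hu : u0 l = 0
          · simp [hu]
          · field_simp
        rw [Finset.sum_congr rfl fun l _ => hterm l, ← Finset.mul_sum, ← hSdef,
          div_mul_cancel₀ _ hS]
    calc x T k = x t k + (∫ s in t..T, f (x s) k)
        + ∑ l, (∫ s in t..T, G (x s) k l) * u0 l := hsplit k
    _ = x t k + Δt * f (x t) k + cl k
        + ((∑ l, (∫ s in t..T, G (x s) k l) * u0 l)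
          + ∑ l, (R k * g l * |u0 l| / (S * u0 l)) * u0 l) := by
        rw [hextra, hRdef, hEdef]; ring
    _ = x t k + Δt * f (x t) k + cl k
        + ∑ l, ((∫ s in t..T, G (x s) k l) + R k * g l * |u0 l| / (S * u0 l)) * u0 l := by
        rw [← Finset.sum_add_distrib]
        congr 1
        exact Finset.sum_congr rfl fun l _ => by ring
  · -- b bound
    intro k
    have : x t k + Δt * f (x t) k + cl k - x t k - Δt * f (x t) k = cl k := by ring
    rw [this]
    exact (hclamp k).1
  · -- A bound
    intro k l
    have hextra : |R k * g l * |u0 l| / (S * u0 l)| ≤ Δt ^ 2 / 2 * (Lf k * g l) := by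
      have hrhs0 : 0 ≤ Δt ^ 2 / 2 * (Lf k * g l) :=
        mul_nonneg (by positivity) (mul_nonneg (hLf0 k) (hg0 l))
      by_cases hS : S = 0
      · have hR0 : R k = 0 := by
          have := (hclamp k).2
          rw [hDdef] at this
          simp only [hS, mul_zero, zero_mul] at this
          simpa [abs_nonpos_iff] using this
        simpa [hR0] using hrhs0
      · by_cases hu : u0 l = 0
        · simpa [hu] using hrhs0
        · have hSpos : 0 < S := lt_of_le_of_ne hS0 (Ne.symm hS)
          have heq : |R k * g l * |u0 l| / (S * u0 l)| = |R k| * g l / S := by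
            rw [abs_div, abs_mul, abs_mul, abs_abs, abs_mul,
              abs_of_nonneg (hg0 l), abs_of_pos hSpos]
            rw [mul_div_mul_right _ _ (abs_ne_zero.2 hu)]
          rw [heq]
          rw [div_le_iff₀ hSpos]
          have h1 : |R k| ≤ Δt ^ 2 / 2 * (Lf k * S) := (hclamp k).2
          calc |R k| * g l ≤ (Δt ^ 2 / 2 * (Lf k * S)) * g l :=
              mul_le_mul_of_nonneg_right h1 (hg0 l)
          _ = Δt ^ 2 / 2 * (Lf k * g l) * S := by ring
    have hS_le : S ≤ ∑ p, ∑ l', MG p l' * Ubar l' := by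
      rw [hSdef, Finset.sum_comm]
      refine Finset.sum_le_sum fun l' _ => ?_
      rw [hgdef, Finset.sum_mul]
      exact Finset.sum_le_sum fun p _ =>
        mul_le_mul_of_nonneg_left (hU l') (hMG0 p l')
    have htr : |(∫ s in t..T, G (x s) k l) + R k * g l * |u0 l| / (S * u0 l) - Δt * G (x t) k l|
        ≤ Δt ^ 2 / 2 * (LG k l * C) + Δt ^ 2 / 2 * (Lf k * g l) := by
      have h0 : (∫ s in t..T, G (x s) k l) + R k * g l * |u0 l| / (S * u0 l)
          - Δt * G (x t) k l
          = ((∫ s in t..T, G (x s) k l) - Δt * G (x t) k l)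
            + R k * g l * |u0 l| / (S * u0 l) := by ring
      rw [h0]
      exact le_trans (abs_add_le _ _) (add_le_add (hEGb k l) hextra)
    refine le_trans htr ?_
    have hmono : Δt ^ 2 / 2 * (LG k l * C)
        ≤ Δt ^ 2 / 2 * (LG k l * ((∑ p, Mf p) + ∑ p, ∑ l', MG p l' * Ubar l')) := by
      refine mul_le_mul_of_nonneg_left ?_ (by positivity)
      refine mul_le_mul_of_nonneg_left ?_ (hLG0 k l)
      rw [hCdef]
      linarith
    calc Δt ^ 2 / 2 * (LG k l * C) + Δt ^ 2 / 2 * (Lf k * g l)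
        ≤ Δt ^ 2 / 2 * (LG k l * ((∑ p, Mf p) + ∑ p, ∑ l', MG p l' * Ubar l'))
          + Δt ^ 2 / 2 * (Lf k * g l) := add_le_add hmono le_rfl
      _ = Δt ^ 2 / 2 * (Lf k * (∑ p, MG p l)
          + LG k l * ((∑ p, Mf p) + ∑ p, ∑ l', MG p l' * Ubar l')) := by
          rw [hgdef]; ring
end

section
/- Let n, m ≥ 1 and let c : ℝᵐ × ℝⁿ → ℝ be a quadratic cost c(u, y) = yᵀQy + 2yᵀSu + uᵀRu + qᵀy + rᵀu with Q symmetric. Let U ⊆ ℝᵐ be nonempty, let β̲_k ≤ β̄_k (k ∈ {1,…,n}) and α̲_{k,l} ≤ ᾱ_{k,l} (l ∈ {1,…,m}) be interval bounds, let Ū_l ≥ 0 satisfy |u_l| ≤ Ū_l for all u ∈ U, and let K ≥ 0. Suppose: (i) χ : U → ℝⁿ is such that for each u ∈ U there exist b ∈ ℝⁿ with b_k ∈ [β̲_k, β̄_k] and A ∈ ℝ^{n×m} with A_{k,l} ∈ [α̲_{k,l}, ᾱ_{k,l}] such that χ(u) = b + Au; (ii) b^{ide} ∈ ℝⁿ with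 b^{ide}_k ∈ [β̲_k, β̄_k] and A^{ide} ∈ ℝ^{n×m} with A^{ide}_{k,l} ∈ [α̲_{k,l}, ᾱ_{k,l}] are fixed, and χ̂(u) = b^{ide} + A^{ide}u; (iii) for every u ∈ U and all y, ŷ of the form b + Au with b, A entrywise in the given intervals, ‖Q(y + ŷ) + 2Su + q‖₂ ≤ K; (iv) there exist u⋆, û ∈ U attaining inf_{u∈U} c(u, χ(u)) and inf_{u∈U} c(u, χ̂(u)) respectively. Then, with δ = ‖ w ‖₂ where w ∈ ℝⁿ has components w_k = (β̄_k − β̲_k) + Σ_{l=1}^{m} (ᾱ_{k,l} − α̲_{k,l})·Ū_l, it holds that | inf_{u∈U} c(u, χ(u)) − inf_{u∈U} c(u, χ̂(u)) | ≤ δ·K. -/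
open scoped BigOperators
open Matrix

/-- The set of next states `b + A u` with `b` and `A` entrywise in the given intervals. -/
def affineReachSet {n m : ℕ} (βlo βhi : Fin n → ℝ) (αlo αhi : Fin n → Fin m → ℝ)
    (u : Fin m → ℝ) : Set (Fin n → ℝ) :=
  {y | ∃ (b : Fin n → ℝ) (A : Matrix (Fin n) (Fin m) ℝ),
    (∀ k, b k ∈ Set.Icc (βlo k) (βhi k)) ∧
    (∀ k l, A k l ∈ Set.Icc (αlo k l) (αhi k l)) ∧
    y = b + A *ᵥ u}

theorem stmt12 (n m : ℕ) (hn : 1 ≤ n) (hm : 1 ≤ m)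
    (Q : Matrix (Fin n) (Fin n) ℝ) (hQ : Q.IsSymm)
    (S : Matrix (Fin n) (Fin m) ℝ) (R : Matrix (Fin m) (Fin m) ℝ)
    (q : Fin n → ℝ) (r : Fin m → ℝ)
    (c : (Fin m → ℝ) → (Fin n → ℝ) → ℝ)
    (hc : ∀ (u : Fin m → ℝ) (y : Fin n → ℝ),
      c u y = y ⬝ᵥ (Q *ᵥ y) + 2 * (y ⬝ᵥ (S *ᵥ u)) + u ⬝ᵥ (R *ᵥ u) + q ⬝ᵥ y + r ⬝ᵥ u)
    (U : Set (Fin m → ℝ)) (hUne : U.Nonempty)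
    (βlo βhi : Fin n → ℝ) (hβ : ∀ k, βlo k ≤ βhi k)
    (αlo αhi : Fin n → Fin m → ℝ) (hα : ∀ k l, αlo k l ≤ αhi k l)
    (Ubar : Fin m → ℝ) (hUbar0 : ∀ l, 0 ≤ Ubar l)
    (hUbar : ∀ u ∈ U, ∀ l, |u l| ≤ Ubar l)
    (K : ℝ) (hK : 0 ≤ K)
    (χ : (Fin m → ℝ) → Fin n → ℝ)
    (hχ : ∀ u ∈ U, χ u ∈ affineReachSet βlo βhi αlo αhi u)
    (bide : Fin n → ℝ) (Aide : Matrix (Fin n) (Fin m) ℝ)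
    (hbide : ∀ k, bide k ∈ Set.Icc (βlo k) (βhi k))
    (hAide : ∀ k l, Aide k l ∈ Set.Icc (αlo k l) (αhi k l))
    (χhat : (Fin m → ℝ) → Fin n → ℝ)
    (hχhat : ∀ u, χhat u = bide + Aide *ᵥ u)
    (hKbound : ∀ u ∈ U, ∀ y ∈ affineReachSet βlo βhi αlo αhi u,
      ∀ y' ∈ affineReachSet βlo βhi αlo αhi u,
        Real.sqrt (∑ k, ((Q *ᵥ (y + y')) k + 2 * (S *ᵥ u) k + q k) ^ 2) ≤ K)
    (ustar uhat : Fin m → ℝ) (hustar : ustar ∈ U) (huhat : uhat ∈ U)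
    (hmin1 : ∀ u ∈ U, c ustar (χ ustar) ≤ c u (χ u))
    (hmin2 : ∀ u ∈ U, c uhat (χhat uhat) ≤ c u (χhat u)) :
    |c ustar (χ ustar) - c uhat (χhat uhat)| ≤
      Real.sqrt (∑ k, ((βhi k - βlo k) + ∑ l, (αhi k l - αlo k l) * Ubar l) ^ 2) * K := by
  set w : Fin n → ℝ := fun k => (βhi k - βlo k) + ∑ l, (αhi k l - αlo k l) * Ubar l with hw
  set δ : ℝ := Real.sqrt (∑ k, (w k) ^ 2) with hδ
  have hδ0 : 0 ≤ δ := Real.sqrt_nonneg _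
  have hw0 : ∀ k, 0 ≤ w k := by
    intro k
    have : 0 ≤ ∑ l, (αhi k l - αlo k l) * Ubar l :=
      Finset.sum_nonneg fun l _ => mul_nonneg (by linarith [hα k l]) (hUbar0 l)
    have := hβ k
    simp only [hw]
    linarith
  have hsymm : ∀ x z : Fin n → ℝ, x ⬝ᵥ (Q *ᵥ z) = z ⬝ᵥ (Q *ᵥ x) := by
    intro x z
    rw [Matrix.dotProduct_mulVec]
    nth_rewrite 1 [← hQ]
    rw [Matrix.vecMul_transpose, dotProduct_comm]
  have key : ∀ u ∈ U, |c u (χ u) - c u (χhat u)| ≤ δ * K := by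
    intro u hu
    obtain ⟨b, A, hb, hA, hy⟩ := hχ u hu
    have hmem : χ u ∈ affineReachSet βlo βhi αlo αhi u := ⟨b, A, hb, hA, hy⟩
    have hmem' : χhat u ∈ affineReachSet βlo βhi αlo αhi u :=
      ⟨bide, Aide, hbide, hAide, hχhat u⟩
    set y : Fin n → ℝ := χ u with hyy
    set y' : Fin n → ℝ := χhat u with hyy'
    set d : Fin n → ℝ := y - y' with hd
    set v : Fin n → ℝ := fun k => (Q *ᵥ (y + y')) k + 2 * (S *ᵥ u) k + q k with hv
    -- the difference of costs is the inner product of d and v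
    have hdiff : c u y - c u y' = ∑ k, d k * v k := by
      have e1 : ∑ k, d k * v k
          = d ⬝ᵥ (Q *ᵥ (y + y')) + 2 * (d ⬝ᵥ (S *ᵥ u)) + d ⬝ᵥ q := by
        simp only [hv, dotProduct, mul_add, Finset.sum_add_distrib, Finset.mul_sum]
        ring_nf
      have e2 : d ⬝ᵥ (Q *ᵥ (y + y')) = y ⬝ᵥ (Q *ᵥ y) - y' ⬝ᵥ (Q *ᵥ y') := by
        have := hsymm y y'
        simp only [hd, sub_dotProduct, Matrix.mulVec_add, dotProduct_add]
        linarith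
      have e3 : d ⬝ᵥ (S *ᵥ u) = y ⬝ᵥ (S *ᵥ u) - y' ⬝ᵥ (S *ᵥ u) := by
        simp [hd, sub_dotProduct]
      have e4 : d ⬝ᵥ q = q ⬝ᵥ y - q ⬝ᵥ y' := by
        rw [dotProduct_comm, hd, dotProduct_sub]
      rw [hc u y, hc u y', e1, e2, e3, e4]
      ring
    -- componentwise bound on d
    have hdk : ∀ k, |d k| ≤ w k := by
      intro k
      have hdk_eq : d k = (b k - bide k) + ∑ l, (A k l - Aide k l) * u l := by
        simp only [hd, hy, hyy', hχhat u, Pi.sub_apply, Pi.add_apply, Matrix.mulVec,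
          dotProduct, sub_mul, Finset.sum_sub_distrib]
        ring
      rw [hdk_eq]
      have h1 : |b k - bide k| ≤ βhi k - βlo k := by
        obtain ⟨l1, r1⟩ := hb k
        obtain ⟨l2, r2⟩ := hbide k
        rw [abs_sub_le_iff]; constructor <;> linarith
      have h2 : |∑ l, (A k l - Aide k l) * u l| ≤ ∑ l, (αhi k l - αlo k l) * Ubar l := by
        refine (Finset.abs_sum_le_sum_abs _ _).trans (Finset.sum_le_sum fun l _ => ?_)
        rw [abs_mul]
        refine mul_le_mul ?_ (hUbar u hu l) (abs_nonneg _) (by linarith [hα k l])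
        obtain ⟨l1, r1⟩ := hA k l
        obtain ⟨l2, r2⟩ := hAide k l
        rw [abs_sub_le_iff]; constructor <;> linarith
      calc |(b k - bide k) + ∑ l, (A k l - Aide k l) * u l|
          ≤ |b k - bide k| + |∑ l, (A k l - Aide k l) * u l| := abs_add_le _ _
        _ ≤ w k := by simp only [hw]; linarith
    -- Cauchy–Schwarz
    have hCS : |∑ k, d k * v k| ≤ Real.sqrt (∑ k, (d k) ^ 2) * Real.sqrt (∑ k, (v k) ^ 2) := by
      calc |∑ k, d k * v k| = Real.sqrt ((∑ k, d k * v k) ^ 2) := (Real.sqrt_sq_eq_abs _).symm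
        _ ≤ Real.sqrt ((∑ k, (d k) ^ 2) * (∑ k, (v k) ^ 2)) :=
            Real.sqrt_le_sqrt (Finset.sum_mul_sq_le_sq_mul_sq Finset.univ d v)
        _ = Real.sqrt (∑ k, (d k) ^ 2) * Real.sqrt (∑ k, (v k) ^ 2) := by
            rw [Real.sqrt_mul (Finset.sum_nonneg fun k _ => sq_nonneg _)]
    have hd_le : Real.sqrt (∑ k, (d k) ^ 2) ≤ δ := by
      apply Real.sqrt_le_sqrt
      refine Finset.sum_le_sum fun k _ => ?_
      have := hdk k
      calc (d k) ^ 2 = |d k| ^ 2 := (sq_abs _).symm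
        _ ≤ (w k) ^ 2 := pow_le_pow_left₀ (abs_nonneg _) this 2
    have hv_le : Real.sqrt (∑ k, (v k) ^ 2) ≤ K := hKbound u hu y hmem y' hmem'
    calc |c u y - c u y'| = |∑ k, d k * v k| := by rw [hdiff]
      _ ≤ Real.sqrt (∑ k, (d k) ^ 2) * Real.sqrt (∑ k, (v k) ^ 2) := hCS
      _ ≤ δ * K := mul_le_mul hd_le hv_le (Real.sqrt_nonneg _) hδ0
  have h1 := key uhat huhat
  have h2 := key ustar hustar
  have h3 := hmin1 uhat huhat
  have h4 := hmin2 ustar hustar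
  rw [abs_le] at h1 h2 ⊢
  constructor <;> linarith [h1.1, h1.2, h2.1, h2.2]
end

section
/- Let n, m ≥ 1 and let c : ℝᵐ × ℝⁿ → ℝ be a quadratic cost c(u, y) = yᵀQy + 2yᵀSu + uᵀRu + qᵀy + rᵀu with Q symmetric. Let U ⊆ ℝᵐ be nonempty, let β̲_k ≤ β̄_k and α̲_{k,l} ≤ ᾱ_{k,l} be interval bounds, let Ū_l ≥ 0 satisfy |u_l| ≤ Ū_l for all u ∈ U, and let K ≥ 0. For u ∈ U define Y(u) = { b + Au : b_k ∈ [β̲_k, β̄_k], A_{k,l} ∈ [α̲_{k,l}, ᾱ_{k,l}] }. Suppose: (i) χ : U → ℝⁿ satisfies χ(u) ∈ Y(u) for all u ∈ U; (ii) for every u ∈ U and all y, ŷ ∈ Y(u), ‖Q(y + ŷ) + 2Su + q‖₂ ≤ K; (iii) the infima c⋆ = inf_{u∈U} c(u, χ(u)) and c^{opt} = inf_{u∈U} inf_{y∈Y(u)} c(u, y) are attained. Then, with δ = ‖w‖₂ where w ∈ ℝⁿ has components w_k = (β̄_k − β̲_k) + Σ_{l=1}^{m} (ᾱ_{k,l}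 − α̲_{k,l})·Ū_l, it holds that 0 ≤ c⋆ − c^{opt} ≤ δ·K; in particular |c⋆ − c^{opt}| ≤ δ·K. -/
open scoped BigOperators
open Matrix

variable {ι : Type*}

private lemma cs_sum (s : Finset ι) (f g : ι → ℝ) :
    ∑ i ∈ s, f i * g i ≤ Real.sqrt (∑ i ∈ s, f i ^ 2) * Real.sqrt (∑ i ∈ s, g i ^ 2) := by
  calc ∑ i ∈ s, f i * g i ≤ |∑ i ∈ s, f i * g i| := le_abs_self _
    _ = Real.sqrt ((∑ i ∈ s, f i * g i) ^ 2) := (Real.sqrt_sq_eq_abs _).symm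
    _ ≤ Real.sqrt ((∑ i ∈ s, f i ^ 2) * ∑ i ∈ s, g i ^ 2) :=
        Real.sqrt_le_sqrt (Finset.sum_mul_sq_le_sq_mul_sq s f g)
    _ = _ := Real.sqrt_mul (Finset.sum_nonneg fun i _ => sq_nonneg _) _

theorem stmt13 (n m : ℕ) (hn : 1 ≤ n) (hm : 1 ≤ m)
    (Q : Matrix (Fin n) (Fin n) ℝ) (hQ : Q.IsSymm)
    (S : Matrix (Fin n) (Fin m) ℝ) (R : Matrix (Fin m) (Fin m) ℝ)
    (q : Fin n → ℝ) (r : Fin m → ℝ)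
    (c : (Fin m → ℝ) → (Fin n → ℝ) → ℝ)
    (hc : ∀ (u : Fin m → ℝ) (y : Fin n → ℝ),
      c u y = y ⬝ᵥ (Q *ᵥ y) + 2 * (y ⬝ᵥ (S *ᵥ u)) + u ⬝ᵥ (R *ᵥ u) + q ⬝ᵥ y + r ⬝ᵥ u)
    (U : Set (Fin m → ℝ)) (hUne : U.Nonempty)
    (βlo βhi : Fin n → ℝ) (hβ : ∀ k, βlo k ≤ βhi k)
    (αlo αhi : Fin n → Fin m → ℝ) (hα : ∀ k l, αlo k l ≤ αhi k l)
    (Ubar : Fin m → ℝ) (hUbar0 : ∀ l, 0 ≤ Ubar l)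
    (hUbar : ∀ u ∈ U, ∀ l, |u l| ≤ Ubar l)
    (K : ℝ) (hK : 0 ≤ K)
    (χ : (Fin m → ℝ) → Fin n → ℝ)
    (hχ : ∀ u ∈ U, χ u ∈ affineReachSet βlo βhi αlo αhi u)
    (hKbound : ∀ u ∈ U, ∀ y ∈ affineReachSet βlo βhi αlo αhi u,
      ∀ y' ∈ affineReachSet βlo βhi αlo αhi u,
        Real.sqrt (∑ k, ((Q *ᵥ (y + y')) k + 2 * (S *ᵥ u) k + q k) ^ 2) ≤ K)
    (ustar : Fin m → ℝ) (hustar : ustar ∈ U)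
    (hmin1 : ∀ u ∈ U, c ustar (χ ustar) ≤ c u (χ u))
    (uopt : Fin m → ℝ) (huopt : uopt ∈ U)
    (yopt : Fin n → ℝ) (hyopt : yopt ∈ affineReachSet βlo βhi αlo αhi uopt)
    (hmin2 : ∀ u ∈ U, ∀ y ∈ affineReachSet βlo βhi αlo αhi u, c uopt yopt ≤ c u y) :
    0 ≤ c ustar (χ ustar) - c uopt yopt ∧
    c ustar (χ ustar) - c uopt yopt ≤
      Real.sqrt (∑ k, ((βhi k - βlo k) + ∑ l, (αhi k l - αlo k l) * Ubar l) ^ 2) * K ∧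
    |c ustar (χ ustar) - c uopt yopt| ≤
      Real.sqrt (∑ k, ((βhi k - βlo k) + ∑ l, (αhi k l - αlo k l) * Ubar l) ^ 2) * K := by

  set δ := Real.sqrt (∑ k, ((βhi k - βlo k) + ∑ l, (αhi k l - αlo k l) * Ubar l) ^ 2) with hδ
  have hδ0 : 0 ≤ δ := Real.sqrt_nonneg _
  -- lower bound
  have hlow : 0 ≤ c ustar (χ ustar) - c uopt yopt :=
    sub_nonneg.mpr (hmin2 ustar hustar (χ ustar) (hχ ustar hustar))
  -- symmetry of Q
  have symmQ : ∀ a b : Fin n → ℝ, a ⬝ᵥ (Q *ᵥ b) = b ⬝ᵥ (Q *ᵥ a) := by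
    intro a b
    rw [Matrix.dotProduct_mulVec, ← Matrix.vecMul_transpose, hQ.eq, dotProduct_comm]
  -- key cost-difference identity
  have key : ∀ (u y y' : _),
      c u y - c u y' = ∑ k, (y k - y' k) * ((Q *ᵥ (y + y')) k + 2 * (S *ᵥ u) k + q k) := by
    intro u y y'
    rw [hc, hc]
    have : ∀ k, (y k - y' k) * ((Q *ᵥ (y + y')) k + 2 * (S *ᵥ u) k + q k)
        = (y k - y' k) * (Q *ᵥ y) k + (y k - y' k) * (Q *ᵥ y') k
          + 2 * ((y k - y' k) * (S *ᵥ u) k) + (y k - y' k) * q k := by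
      intro k
      rw [Matrix.mulVec_add]
      simp [Pi.add_apply]
      ring
    rw [Finset.sum_congr rfl fun k _ => this k]
    simp only [Finset.sum_add_distrib, ← Finset.mul_sum]
    have e1 : ∑ k, ((y k - y' k) * (Q *ᵥ y) k) = y ⬝ᵥ (Q *ᵥ y) - y' ⬝ᵥ (Q *ᵥ y) := by
      simp [dotProduct, sub_mul, Finset.sum_sub_distrib]
    have e2 : ∑ k, ((y k - y' k) * (Q *ᵥ y') k) = y ⬝ᵥ (Q *ᵥ y') - y' ⬝ᵥ (Q *ᵥ y') := by
      simp [dotProduct, sub_mul, Finset.sum_sub_distrib]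
    have e3 : ∑ k, ((y k - y' k) * (S *ᵥ u) k) = y ⬝ᵥ (S *ᵥ u) - y' ⬝ᵥ (S *ᵥ u) := by
      simp [dotProduct, sub_mul, Finset.sum_sub_distrib]
    have e4 : ∑ k, ((y k - y' k) * q k) = q ⬝ᵥ y - q ⬝ᵥ y' := by
      simp [dotProduct, sub_mul, mul_sub, Finset.sum_sub_distrib, mul_comm]
    rw [e1, e2, e3, e4, symmQ y' y]
    ring
  -- componentwise distance bound
  have dist : ∀ u ∈ U, ∀ y ∈ affineReachSet βlo βhi αlo αhi u,
      ∀ y' ∈ affineReachSet βlo βhi αlo αhi u, ∀ k,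
      |y k - y' k| ≤ (βhi k - βlo k) + ∑ l, (αhi k l - αlo k l) * Ubar l := by
    rintro u hu y ⟨b, A, hb, hA, rfl⟩ y' ⟨b', A', hb', hA', rfl⟩ k
    have hy : (b + A *ᵥ u) k - (b' + A' *ᵥ u) k
        = (b k - b' k) + ∑ l, (A k l - A' k l) * u l := by
      simp [Matrix.mulVec, dotProduct, Finset.sum_sub_distrib, sub_mul]
      ring
    rw [hy]
    calc |(b k - b' k) + ∑ l, (A k l - A' k l) * u l|
        ≤ |b k - b' k| + |∑ l, (A k l - A' k l) * u l| := abs_add_le _ _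
      _ ≤ |b k - b' k| + ∑ l, |(A k l - A' k l) * u l| :=
          add_le_add le_rfl (Finset.abs_sum_le_sum_abs _ _)
      _ ≤ (βhi k - βlo k) + ∑ l, (αhi k l - αlo k l) * Ubar l := by
          gcongr with l hl
          · rw [abs_sub_le_iff]
            constructor <;> [linarith [(hb k).2, (hb' k).1]; linarith [(hb k).1, (hb' k).2]]
          · rw [abs_mul]
            have h1 : |A k l - A' k l| ≤ αhi k l - αlo k l := by
              rw [abs_sub_le_iff]
              constructor <;>
                [linarith [(hA k l).2, (hA' k l).1]; linarith [(hA k l).1, (hA' k l).2]]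
            exact mul_le_mul h1 (hUbar u hu l) (abs_nonneg _)
              (by linarith [hα k l])
  -- main gap bound for two points in the reach set
  have gap : ∀ u ∈ U, ∀ y ∈ affineReachSet βlo βhi αlo αhi u,
      ∀ y' ∈ affineReachSet βlo βhi αlo αhi u, c u y - c u y' ≤ δ * K := by
    intro u hu y hy y' hy'
    rw [key u y y']
    calc ∑ k, (y k - y' k) * ((Q *ᵥ (y + y')) k + 2 * (S *ᵥ u) k + q k)
        ≤ Real.sqrt (∑ k, (y k - y' k) ^ 2) *
          Real.sqrt (∑ k, ((Q *ᵥ (y + y')) k + 2 * (S *ᵥ u) k + q k) ^ 2) :=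
          cs_sum _ _ _
      _ ≤ δ * K := by
          apply mul_le_mul _ (hKbound u hu y hy y' hy') (Real.sqrt_nonneg _) hδ0
          rw [hδ]
          apply Real.sqrt_le_sqrt
          apply Finset.sum_le_sum
          intro k _
          have h := dist u hu y hy y' hy' k
          calc (y k - y' k) ^ 2 = |y k - y' k| ^ 2 := (sq_abs _).symm
            _ ≤ ((βhi k - βlo k) + ∑ l, (αhi k l - αlo k l) * Ubar l) ^ 2 :=
                pow_le_pow_left₀ (abs_nonneg _) h 2
  have hup : c ustar (χ ustar) - c uopt yopt ≤ δ * K := by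
    have h1 : c ustar (χ ustar) ≤ c uopt (χ uopt) := hmin1 uopt huopt
    have h2 : c uopt (χ uopt) - c uopt yopt ≤ δ * K :=
      gap uopt huopt (χ uopt) (hχ uopt huopt) yopt hyopt
    linarith
  exact ⟨hlow, hup, by rw [abs_of_nonneg hlow]; exact hup⟩
end
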